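/- arXiv:2304.08791 — 7 statements merged into one kernel-verified Lean document; each statement's English description precedes it below -/
import Mathlib

section
/- The weight γ(c ε_0) = (nc/(n+1)) ε_0 − (c/(n+1)) Σ_{i=1}^n ε_i is singular and sl_{n+1}-integral if and only if c ∈ {−1, −2, …, −n}. -/
/-!
The dot action fixes `λ` exactly when `w` fixes `λ + ρ`, so `λ` is singular iff `λ + ρ` has two
equal coordinates. Up to a common constant, the coordinates of `γ(c ε_0) + ρ` are `c` at index `0`
and `-k` at index `k ≥ 1`, so a coincidence happens iff `c = -k` for some `1 ≤ k ≤ n`. Such a `c`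
is an integer, and then the consecutive differences `c, 0, …, 0` are integers as well.
-/

open Function Equiv

theorem Equiv.Perm.exists_ne_one_forall_apply_inv_eq_iff {α β : Type*} [DecidableEq α]
    (f : α → β) : (∃ w : Perm α, w ≠ 1 ∧ ∀ k, f (w⁻¹ k) = f k) ↔ ¬ Injective f := by
  rw [not_injective_iff]
  constructor
  · rintro ⟨w, hw, hfix⟩
    obtain ⟨x, hx⟩ : ∃ x, w x ≠ x := by
      by_contra! h
      exact hw (Equiv.ext h)
    exact ⟨x, w x, by simpa using hfix (w x), hx.symm⟩
  · rintro ⟨a, b, hab, hne⟩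
    refine ⟨swap a b, mt swap_eq_one_iff.mp hne, fun k => ?_⟩
    rw [swap_inv]
    rcases eq_or_ne k a with rfl | hka
    · simpa using hab.symm
    rcases eq_or_ne k b with rfl | hkb
    · simpa using hab
    rw [swap_apply_of_ne_of_ne hka hkb]

/-- The coordinates of `γ(c ε_0)` in the basis `ε_0, …, ε_n`. -/
noncomputable def gammaWeight (n : ℕ) (c : ℂ) (k : Fin (n + 1)) : ℂ :=
  if k = 0 then (n : ℂ) * c / (n + 1) else -c / (n + 1)

noncomputable def rhoSL (n : ℕ) (k : Fin (n + 1)) : ℂ :=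
  ((n : ℂ) - 2 * (k : ℕ)) / 2

variable {n : ℕ} {c : ℂ}

theorem gammaWeight_apply (k : Fin (n + 1)) :
    gammaWeight n c k = -c / (n + 1) + if k = 0 then c else 0 := by
  have hn : (n : ℂ) + 1 ≠ 0 := by exact_mod_cast n.succ_ne_zero
  unfold gammaWeight
  split_ifs
  · field_simp
    ring
  · ring

theorem gammaWeight_castSucc_sub_succ (i : Fin n) :
    gammaWeight n c i.castSucc - gammaWeight n c i.succ = if i.castSucc = 0 then c else 0 := by
  simp [gammaWeight_apply, Fin.succ_ne_zero]

theorem gammaWeight_add_rhoSL_apply (k : Fin (n + 1)) :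
    (gammaWeight n c + rhoSL n) k = (-c / (n + 1) + n / 2) + ((if k = 0 then c else 0) - k) := by
  rw [Pi.add_apply, gammaWeight_apply, rhoSL]
  ring

theorem not_injective_gammaWeight_add_rhoSL_iff :
    ¬ Injective (gammaWeight n c + rhoSL n) ↔ ∃ m : ℕ, 1 ≤ m ∧ m ≤ n ∧ c = -(m : ℂ) := by
  simp only [not_injective_iff, gammaWeight_add_rhoSL_apply, add_right_inj]
  constructor
  · rintro ⟨a, b, hab, hne⟩
    rcases eq_or_ne a 0 with rfl | ha
    · have hb : b ≠ 0 := hne.symm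
      refine ⟨b, Nat.one_le_iff_ne_zero.mpr (Fin.val_ne_zero_iff.mpr hb), b.is_le, ?_⟩
      simpa [hb, sub_eq_neg_self] using hab
    rcases eq_or_ne b 0 with rfl | hb
    · refine ⟨a, Nat.one_le_iff_ne_zero.mpr (Fin.val_ne_zero_iff.mpr ha), a.is_le, ?_⟩
      simpa [ha, eq_comm] using hab
    · simp only [ha, hb, if_false, zero_sub, neg_inj, Nat.cast_inj] at hab
      exact absurd (Fin.ext hab) hne
  · rintro ⟨m, hm1, hmn, rfl⟩
    have hm0 : (⟨m, by omega⟩ : Fin (n + 1)) ≠ 0 := Fin.ne_of_val_ne (by simp; omega)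
    exact ⟨0, ⟨m, by omega⟩, by simp [hm0], hm0.symm⟩

theorem statement2_general (n : ℕ) (c : ℂ) :
    ((∀ i : Fin n, ∃ m : ℤ,
        (if (i.castSucc : Fin (n + 1)) = 0 then (n : ℂ) * c / (n + 1) else -c / (n + 1))
          - (if (i.succ : Fin (n + 1)) = 0 then (n : ℂ) * c / (n + 1) else -c / (n + 1))
          = (m : ℂ)) ∧
      ∃ w : Equiv.Perm (Fin (n + 1)), w ≠ 1 ∧
        ∀ k : Fin (n + 1),
          (if (w⁻¹ k : Fin (n + 1)) = 0 then (n : ℂ) * c / (n + 1) else -c / (n + 1))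
              + ((n : ℂ) - 2 * ((w⁻¹ k : Fin (n + 1)) : ℕ)) / 2
              - ((n : ℂ) - 2 * (k : ℕ)) / 2
            = (if k = 0 then (n : ℂ) * c / (n + 1) else -c / (n + 1)))
      ↔ ∃ m : ℕ, 1 ≤ m ∧ m ≤ n ∧ c = -(m : ℂ) := by
  change ((∀ i : Fin n, ∃ m : ℤ, gammaWeight n c i.castSucc - gammaWeight n c i.succ = m) ∧
      ∃ w : Perm (Fin (n + 1)), w ≠ 1 ∧
        ∀ k, gammaWeight n c (w⁻¹ k) + rhoSL n (w⁻¹ k) - rhoSL n k = gammaWeight n c k) ↔ _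
  have hdot : ∀ w : Perm (Fin (n + 1)),
      (∀ k, gammaWeight n c (w⁻¹ k) + rhoSL n (w⁻¹ k) - rhoSL n k = gammaWeight n c k) ↔
        ∀ k, (gammaWeight n c + rhoSL n) (w⁻¹ k) = (gammaWeight n c + rhoSL n) k :=
    fun w => forall_congr' fun k => by rw [Pi.add_apply, Pi.add_apply, sub_eq_iff_eq_add]
  simp only [hdot, Perm.exists_ne_one_forall_apply_inv_eq_iff,
    not_injective_gammaWeight_add_rhoSL_iff]
  refine ⟨And.right, fun hc => ⟨fun i => ?_, hc⟩⟩
  obtain ⟨m, -, -, rfl⟩ := hc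
  refine ⟨if i.castSucc = 0 then -m else 0, ?_⟩
  rw [gammaWeight_castSucc_sub_succ]
  split_ifs <;> simp

/-- The weight `γ(c ε_0) = (nc/(n+1)) ε_0 - (c/(n+1)) Σ_{i=1}^n ε_i` is singular
(its dot stabilizer under `S_{n+1}` is non-trivial) and `sl_{n+1}`-integral (consecutive
coefficient differences are integers) iff `c ∈ {-1, -2, …, -n}`. -/
theorem statement2 (n : ℕ) (hn : 2 ≤ n) (c : ℂ) :
    ((∀ i : Fin n, ∃ m : ℤ,
        (if (i.castSucc : Fin (n + 1)) = 0 then (n : ℂ) * c / (n + 1) else -c / (n + 1))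
          - (if (i.succ : Fin (n + 1)) = 0 then (n : ℂ) * c / (n + 1) else -c / (n + 1))
          = (m : ℂ)) ∧
      ∃ w : Equiv.Perm (Fin (n + 1)), w ≠ 1 ∧
        ∀ k : Fin (n + 1),
          (if (w⁻¹ k : Fin (n + 1)) = 0 then (n : ℂ) * c / (n + 1) else -c / (n + 1))
              + ((n : ℂ) - 2 * ((w⁻¹ k : Fin (n + 1)) : ℕ)) / 2
              - ((n : ℂ) - 2 * (k : ℕ)) / 2
            = (if k = 0 then (n : ℂ) * c / (n + 1) else -c / (n + 1)))
      ↔ ∃ m : ℕ, 1 ≤ m ∧ m ≤ n ∧ c = -(m : ℂ) :=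
  statement2_general n c
end

section
/- Let M be an sl_{n+1}-module and v ∈ M a vector satisfying e_{0i} v = v for i = 1,…,n. Then for each i and each m ≥ 0 one has (e_{0i}−1)^{m} h_i^{m} v = k_m v for some nonzero scalar k_m ∈ ℂ (in fact k_m = (−1)^m m!), and (e_{0i}−1)^{s} h_i^{m} v = 0 for all s > m, where h_i = e_{ii} − (1/(n+1)) Σ_{k=0}^n e_{kk} regarded as an element of sl_{n+1}. -/
open Matrix

attribute [local instance 100] LieRing.ofAssociativeRing

/-!
Put `a = e_{0i} - 1` and `h = h_i`. The relation `[h, e_{0i}] = -e_{0i}` becomes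
`a h = (h + 1) a + 1`, hence `a^(s+1) h = (h + s + 1) a^(s+1) + (s + 1) a^s`. Since `a v = 0`,
induction on `m` shows that `a^s h^m v` vanishes for `s > m` and that `a^m h^m v = m! v`.
-/

section PowCommutator

variable {R : Type*} [Ring R] {a h : R}

theorem pow_succ_mul_of_mul_eq (hc : a * h = h * a + a + 1) (s : ℕ) :
    a ^ (s + 1) * h = (h + (s + 1 : ℕ)) * a ^ (s + 1) + (s + 1 : ℕ) * a ^ s := by
  induction s with
  | zero => simpa [add_mul] using hc
  | succ s ih =>
    have hcomm : Commute a ((s + 1 : ℕ) : R) := Nat.cast_commute _ _ |>.symm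
    calc a ^ (s + 1 + 1) * h = a * (a ^ (s + 1) * h) := by rw [← mul_assoc, ← pow_succ']
      _ = (a * h + (s + 1 : ℕ) * a) * a ^ (s + 1) + (s + 1 : ℕ) * a ^ (s + 1) := by
        rw [ih, mul_add, ← mul_assoc, mul_add, ← mul_assoc, hcomm.eq, mul_assoc _ a,
          ← pow_succ', add_mul]
      _ = (h + (s + 1 + 1 : ℕ)) * a ^ (s + 1 + 1) + (s + 1 + 1 : ℕ) * a ^ (s + 1) := by
        rw [hc, pow_succ' a (s + 1)]
        push_cast
        noncomm_ring

variable {M : Type*} [AddCommGroup M] [Module R M] {v : M}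

theorem pow_succ_mul_pow_succ_smul (hc : a * h = h * a + a + 1) (s m : ℕ) :
    (a ^ (s + 1) * h ^ (m + 1)) • v =
      (h + (s + 1 : ℕ)) • (a ^ (s + 1) * h ^ m) • v + (s + 1) • (a ^ s * h ^ m) • v := by
  rw [pow_succ' h, ← mul_assoc, pow_succ_mul_of_mul_eq hc, add_mul, add_smul, mul_assoc,
    mul_assoc, mul_smul (h + _), mul_smul ((s + 1 : ℕ) : R), Nat.cast_smul_eq_nsmul]

theorem pow_mul_pow_smul_eq_zero (hc : a * h = h * a + a + 1) (hv : a • v = 0) :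
    ∀ {m s : ℕ}, m < s → (a ^ s * h ^ m) • v = 0
  | 0, s + 1, _ => by rw [pow_zero, mul_one, pow_succ, mul_smul, hv, smul_zero]
  | m + 1, s + 1, hms => by
    rw [pow_succ_mul_pow_succ_smul hc, pow_mul_pow_smul_eq_zero hc hv (by omega),
      pow_mul_pow_smul_eq_zero hc hv (by omega), smul_zero, smul_zero, add_zero]

theorem pow_mul_pow_smul_eq_factorial_smul (hc : a * h = h * a + a + 1) (hv : a • v = 0) :
    ∀ m : ℕ, (a ^ m * h ^ m) • v = m.factorial • v
  | 0 => by simp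
  | m + 1 => by
    rw [pow_succ_mul_pow_succ_smul hc, pow_mul_pow_smul_eq_zero hc hv (Nat.lt_succ_self m),
      pow_mul_pow_smul_eq_factorial_smul hc hv m, smul_zero, zero_add, smul_smul,
      Nat.factorial_succ]

end PowCommutator

theorem lie_single_diag_sub_smul_one {ι R : Type*} [Fintype ι] [DecidableEq ι] [CommRing R]
    {i j : ι} (hij : i ≠ j) (c r : R) :
    ⁅single j j 1 - c • (1 : Matrix ι ι R), single i j r⁆ = -single i j r := by
  rw [Ring.lie_def]
  simp only [sub_mul, mul_sub, smul_mul_assoc, mul_smul_comm, one_mul, mul_one,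
    single_mul_single_same, single_mul_single_of_ne (1 : R) j j i hij.symm]
  abel

/-- Let `M` be a module for `sl_{n+1}` (realized inside `gl_{n+1}`), and let
`v ∈ M` satisfy `e_{0i} v = v` for `i = 1,…,n`.  Then for each `i` and `m ≥ 0`,
`(e_{0i} - 1)^m h_i^m v = k_m v` for some nonzero scalar `k_m ∈ ℂ`, and
`(e_{0i} - 1)^s h_i^m v = 0` for all `s > m`, where `h_i = e_{ii} - (1/(n+1)) Σ_k e_{kk}`. -/
theorem statement4 (n : ℕ) (M : Type*) [AddCommGroup M] [Module ℂ M]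
    [LieRingModule (Matrix (Fin (n + 1)) (Fin (n + 1)) ℂ) M]
    [LieModule ℂ (Matrix (Fin (n + 1)) (Fin (n + 1)) ℂ) M]
    (v : M)
    (hv : ∀ j : Fin n, ⁅(single 0 j.succ 1 : Matrix (Fin (n + 1)) (Fin (n + 1)) ℂ), v⁆ = v)
    (i : Fin n) (m : ℕ) :
    (∃ k : ℂ, k ≠ 0 ∧
      ((LieModule.toEnd ℂ (Matrix (Fin (n + 1)) (Fin (n + 1)) ℂ) M
            (single 0 i.succ 1) - 1) ^ m *
        (LieModule.toEnd ℂ (Matrix (Fin (n + 1)) (Fin (n + 1)) ℂ) M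
            (single i.succ i.succ 1 - ((n : ℂ) + 1)⁻¹ • 1)) ^ m) v = k • v) ∧
    ∀ s : ℕ, m < s →
      ((LieModule.toEnd ℂ (Matrix (Fin (n + 1)) (Fin (n + 1)) ℂ) M
            (single 0 i.succ 1) - 1) ^ s *
        (LieModule.toEnd ℂ (Matrix (Fin (n + 1)) (Fin (n + 1)) ℂ) M
            (single i.succ i.succ 1 - ((n : ℂ) + 1)⁻¹ • 1)) ^ m) v = 0 := by
  set ρ := LieModule.toEnd ℂ (Matrix (Fin (n + 1)) (Fin (n + 1)) ℂ) M
  set E := ρ (single 0 i.succ 1)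
  set H := ρ (single i.succ i.succ 1 - ((n : ℂ) + 1)⁻¹ • 1)
  have hHE : H * E - E * H = -E := by
    rw [← Ring.lie_def, ← LieHom.map_lie,
      lie_single_diag_sub_smul_one (Fin.succ_ne_zero i).symm, map_neg]
  have hc : (E - 1) * H = H * (E - 1) + (E - 1) + 1 := by
    linear_combination (norm := noncomm_ring) -hHE
  have hEv : (E - 1) • v = 0 := by
    rw [sub_smul, one_smul, Module.End.smul_def, LieModule.toEnd_apply_apply, hv i, sub_self]
  refine ⟨⟨m.factorial, by exact_mod_cast m.factorial_ne_zero, ?_⟩, fun s hs => ?_⟩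
  · rw [← Module.End.smul_def, pow_mul_pow_smul_eq_factorial_smul hc hEv, Nat.cast_smul_eq_nsmul]
  · rw [← Module.End.smul_def, pow_mul_pow_smul_eq_zero hc hEv hs]
end

section
/- Let M be an sl_{n+1}-module on which each e_{0i}−1 (i=1,…,n) acts locally nilpotently and such that the Whittaker subspace wh(M) = {v ∈ M : e_{0i} v = v for all i} is finite-dimensional. Then M is a free module over the polynomial algebra U(h_n) = ℂ[h_1,…,h_n], and M ≅ U(h_n) ⊗ wh(M) as vector spaces. -/
/-!
The `h_i` act on `M` through a polynomial action of `ℂ[h]`, and `e_{0i}` shifts it: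
`e_{0i} p(h) = p(h + ε_i) e_{0i}`. On a Whittaker vector `w` the operator `e_{0i} - 1` therefore
acts as the forward difference `Δ_i` in the variable `h_i`: `(e_{0i} - 1) p(h) w = (Δ_i p)(h) w`.
Since `Δ^m h^d = 0` unless `m ≤ d`, and `Δ^m h^m = m!`, the operators `(e - 1)^m` are triangular
against the vectors `h^d w` with `|d| ≤ |m|`. Applying `(e - 1)^m` for a monomial `m` of maximal
degree shows that `p ⊗ w ↦ p(h) w` is injective on `ℂ[h] ⊗ wh(M)`. For surjectivity, if all
`(e - 1)^d v` with `|d| = N + 1` vanish, then those with `|d| = N` are Whittaker vectors, and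
subtracting `∑_{|d| = N} (d!)⁻¹ h^d (e - 1)^d v` from `v` brings `N` down by one.
-/

open Matrix MvPolynomial TensorProduct

attribute [local instance 100] LieRing.ofAssociativeRing

namespace MvPolynomial

section Commuting

variable {σ R A : Type*} [CommSemiring R] [Semiring A] [Algebra R A]

open scoped IsMulCommutative in
noncomputable def aevalOfCommute (T : σ → A) (hT : ∀ i j, Commute (T i) (T j)) :
    MvPolynomial σ R →ₐ[R] A :=
  haveI := Algebra.isMulCommutative_adjoin R (s := Set.range T) <| by
    rintro _ ⟨i, rfl⟩ _ ⟨j, rfl⟩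
    exact hT i j
  (Algebra.adjoin R (Set.range T)).val.comp <|
    aeval fun i => ⟨T i, Algebra.subset_adjoin (Set.mem_range_self i)⟩

@[simp]
theorem aevalOfCommute_X (T : σ → A) (hT : ∀ i j, Commute (T i) (T j)) (i : σ) :
    aevalOfCommute (R := R) T hT (X i) = T i := by
  simp [aevalOfCommute]

theorem aevalOfCommute_monomial_eq_prod_ofFn {n : ℕ} (T : Fin n → A)
    (hT : ∀ i j, Commute (T i) (T j)) (m : Fin n → ℕ) :
    aevalOfCommute (R := R) T hT (monomial (Finsupp.equivFunOnFinite.symm m) 1) =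
      (List.ofFn fun i => T i ^ m i).prod := by
  have : monomial (Finsupp.equivFunOnFinite.symm m) (1 : R) =
      (List.ofFn fun i => X i ^ m i).prod := by
    rw [List.prod_ofFn, monomial_eq, C_1, one_mul, Finsupp.prod_fintype _ _ (by simp)]
    rfl
  simp [this, map_list_prod, List.map_ofFn, Function.comp_def]

end Commuting

theorem monomial_eq_monomial_erase_mul_X_pow {σ R : Type*} [CommSemiring R] (i : σ)
    (d : σ →₀ ℕ) (c : R) : monomial d c = monomial (d.erase i) c * X i ^ d i := by
  rw [X_pow_eq_monomial, monomial_mul, mul_one, Finsupp.erase_add_single]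

section Difference

open scoped fwdDiff

variable {σ R : Type*} [CommRing R] [DecidableEq σ]

noncomputable def shift (i : σ) : MvPolynomial σ R →ₐ[R] MvPolynomial σ R :=
  aeval (Function.update X i (X i + 1))

@[simp]
theorem shift_X_self (i : σ) : shift i (X i : MvPolynomial σ R) = X i + 1 := by
  simp [shift]

@[simp]
theorem shift_X_of_ne {i j : σ} (h : j ≠ i) : shift i (X j : MvPolynomial σ R) = X j := by
  simp [shift, h]

theorem shift_comp_shift (i j : σ) :
    (shift i).comp (shift j) = ((shift j).comp (shift i) : MvPolynomial σ R →ₐ[R] _) := by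
  refine algHom_ext fun k => ?_
  by_cases hki : k = i <;> by_cases hkj : k = j <;> subst_vars <;> simp [*]

theorem shift_monomial_erase (i : σ) (d : σ →₀ ℕ) (c : R) :
    shift i (monomial (d.erase i) c) = monomial (d.erase i) c := by
  rw [shift, aeval_monomial, monomial_eq, algebraMap_eq]
  congr 1
  refine Finsupp.prod_congr fun j hj => ?_
  rw [Function.update_of_ne (by rintro rfl; simp at hj)]

noncomputable def delta (i : σ) : Module.End R (MvPolynomial σ R) :=
  (shift i).toLinearMap - 1

theorem delta_apply (i : σ) (p : MvPolynomial σ R) : delta i p = shift i p - p :=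
  rfl

theorem delta_commute (i j : σ) :
    Commute (delta i : Module.End R (MvPolynomial σ R)) (delta j) := by
  have : Commute ((shift i).toLinearMap : Module.End R (MvPolynomial σ R)) (shift j).toLinearMap :=
    LinearMap.ext fun p => AlgHom.congr_fun (shift_comp_shift i j) p
  exact (this.sub_left (Commute.one_left _)).sub_right
    ((Commute.one_right _).sub_left (Commute.one_left _))

noncomputable def deltaAeval : MvPolynomial σ R →ₐ[R] Module.End R (MvPolynomial σ R) :=
  aevalOfCommute delta delta_commute

theorem deltaAeval_X (i : σ) :
    deltaAeval (X i) = (delta i : Module.End R (MvPolynomial σ R)) :=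
  aevalOfCommute_X _ _ i

theorem delta_pow_apply_eq_fwdDiff_iter (i : σ) (F : MvPolynomial σ R → MvPolynomial σ R)
    (hF : ∀ x, shift i (F x) = F (shift i x)) (a : ℕ) :
    (delta i ^ a) (F (X i)) = (Δ_[1] ^[a] F) (X i) := by
  induction a generalizing F with
  | zero => rfl
  | succ a ih =>
    have hΔF : ∀ x, shift i (Δ_[1] F x) = Δ_[1] F (shift i x) := fun x => by
      simp only [fwdDiff, map_sub, hF, map_add, map_one]
    rw [pow_succ, Module.End.mul_apply, Function.iterate_succ_apply, ← ih _ hΔF, delta_apply, hF,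
      shift_X_self, fwdDiff]

theorem delta_pow_monomial (i : σ) (d : σ →₀ ℕ) (c : R) (a : ℕ) :
    (delta i ^ a) (monomial d c) =
      monomial (d.erase i) c * (Δ_[1] ^[a] fun x : MvPolynomial σ R => x ^ d i) (X i) := by
  have hF : ∀ x, shift i (monomial (d.erase i) c * x ^ d i) =
      monomial (d.erase i) c * shift i x ^ d i := fun x => by
    rw [map_mul, map_pow, shift_monomial_erase]
  rw [monomial_eq_monomial_erase_mul_X_pow i, delta_pow_apply_eq_fwdDiff_iter i _ hF]
  change (Δ_[1] ^[a] (monomial (d.erase i) c • fun x : MvPolynomial σ R => x ^ d i)) (X i) = _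
  rw [fwdDiff_iter_const_smul]
  rfl

theorem delta_pow_monomial_of_lt {i : σ} {d : σ →₀ ℕ} {a : ℕ} (h : d i < a) (c : R) :
    (delta i ^ a) (monomial d c) = 0 := by
  rw [delta_pow_monomial, fwdDiff_iter_pow_eq_zero_of_lt h, Pi.zero_apply, mul_zero]

theorem delta_pow_monomial_self (i : σ) (d : σ →₀ ℕ) (c : R) :
    (delta i ^ d i) (monomial d c) = monomial (d.erase i) ((d i).factorial * c) := by
  rw [delta_pow_monomial, fwdDiff_iter_eq_factorial, Pi.natCast_apply, ← map_natCast C, mul_comm,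
    C_mul_monomial]

theorem deltaAeval_monomial_apply_of_lt {d m : σ →₀ ℕ} {i : σ} (h : d i < m i) (c : R) :
    deltaAeval (monomial m 1) (monomial d c) = 0 := by
  rw [monomial_eq_monomial_erase_mul_X_pow i m, map_mul, Module.End.mul_apply, map_pow,
    deltaAeval_X, delta_pow_monomial_of_lt h, map_zero]

theorem deltaAeval_monomial_self (d : σ →₀ ℕ) (c : R) :
    deltaAeval (monomial d 1) (monomial d c) =
      C ((d.prod fun _ a => (a.factorial : R)) * c) := by
  induction d using Finsupp.induction generalizing c with
  | zero => simp [← C_apply]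
  | single_add i b f hi hb ih =>
    set d := Finsupp.single i b + f with hd
    have hdi : d i = b := by simp [d, Finsupp.notMem_support_iff.mp hi]
    have herase : d.erase i = f := by
      rw [Finsupp.erase_add, Finsupp.erase_single, zero_add, Finsupp.erase_of_notMem_support hi]
    rw [monomial_eq_monomial_erase_mul_X_pow i d (1 : R), herase, map_mul, Module.End.mul_apply,
      map_pow, deltaAeval_X, delta_pow_monomial_self, herase, ih, hd,
      Finsupp.prod_add_index_of_disjoint (by simpa [Finsupp.support_single i hb] using hi),
      Finsupp.prod_single_index (by simp), hdi]
    ring_nf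

end Difference

end MvPolynomial

theorem Finsupp.exists_lt_of_degree_le_of_ne {σ : Type*} {d m : σ →₀ ℕ}
    (hdeg : d.degree ≤ m.degree) (hne : d ≠ m) : ∃ i, d i < m i := by
  by_contra! h
  have hmd : m ≤ d := h
  have hsub : (d - m).degree = 0 := by
    have := congrArg Finsupp.degree (tsub_add_cancel_of_le hmd)
    rw [map_add] at this
    omega
  exact hne (le_antisymm (tsub_eq_zero_iff_le.mp ((Finsupp.degree_eq_zero_iff _).mp hsub)) hmd)

theorem Finsupp.prod_factorial_ne_zero {σ K : Type*} [Field K] [CharZero K] (m : σ →₀ ℕ) :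
    (m.prod fun _ a => (a.factorial : K)) ≠ 0 :=
  Finset.prod_ne_zero_iff.mpr fun _ _ => Nat.cast_ne_zero.mpr (Nat.factorial_ne_zero _)

theorem MvPolynomial.deltaAeval_monomial_monomial {σ R : Type*} [CommRing R] [DecidableEq σ]
    {d m : σ →₀ ℕ} (hdeg : d.degree ≤ m.degree) :
    deltaAeval (monomial m 1) (monomial d (1 : R)) =
      if d = m then C (m.prod fun _ a => (a.factorial : R)) else 0 := by
  split_ifs with hdm
  · rw [hdm, deltaAeval_monomial_self, mul_one]
  · obtain ⟨i, hi⟩ := Finsupp.exists_lt_of_degree_le_of_ne hdeg hdm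
    exact deltaAeval_monomial_apply_of_lt hi 1

section Whittaker

variable {K V ι : Type*} [Field K] [AddCommGroup V] [Module K V]

def whittaker (E : ι → Module.End K V) : Submodule K V :=
  ⨅ i, Module.End.eigenspace (E i) 1

theorem mem_whittaker {E : ι → Module.End K V} {w : V} :
    w ∈ whittaker E ↔ ∀ i, E i w = w := by
  simp [whittaker, Submodule.mem_iInf]

theorem commute_sub_one {E : ι → Module.End K V} (hEE : ∀ i j, Commute (E i) (E j))
    (i j : ι) : Commute (E i - 1) (E j - 1) :=
  ((hEE i j).sub_right (Commute.one_right _)).sub_left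
    ((Commute.one_left _).sub_right (Commute.one_right _))

variable [DecidableEq ι] {H E : ι → Module.End K V} (hHH : ∀ i j, Commute (H i) (H j))

theorem mul_aevalOfCommute (hEH : ∀ i j, E i * H j - H j * E i = if i = j then E i else 0)
    (i : ι) (p : MvPolynomial ι K) :
    E i * aevalOfCommute H hHH p = aevalOfCommute H hHH (shift i p) * E i := by
  induction p using MvPolynomial.induction_on with
  | C a =>
    simp only [← algebraMap_eq, AlgHom.commutes]
    exact (Algebra.commutes a (E i)).symm
  | add p q hp hq => rw [map_add, map_add, map_add, mul_add, add_mul, hp, hq]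
  | mul_X p j hp =>
    have hEiHj : E i * H j = aevalOfCommute H hHH (shift i (X j : MvPolynomial ι K)) * E i := by
      rw [← sub_add_cancel (E i * H j) (H j * E i), hEH i j]
      by_cases hji : j = i
      · subst hji
        simp [add_mul, add_comm]
      · simp [hji, Ne.symm hji]
    rw [map_mul, map_mul, map_mul, aevalOfCommute_X, ← mul_assoc, hp, mul_assoc, hEiHj, mul_assoc]

theorem sub_one_apply_aevalOfCommute
    (hEH : ∀ i j, E i * H j - H j * E i = if i = j then E i else 0)
    {i : ι} {w : V} (hw : E i w = w) (p : MvPolynomial ι K) :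
    (E i - 1) (aevalOfCommute H hHH p w) = aevalOfCommute H hHH (delta i p) w := by
  rw [LinearMap.sub_apply, ← Module.End.mul_apply, mul_aevalOfCommute hHH hEH,
    Module.End.mul_apply, hw, delta_apply, map_sub, LinearMap.sub_apply, Module.End.one_apply]

theorem aevalOfCommute_sub_one_apply_aevalOfCommute (hEE : ∀ i j, Commute (E i) (E j))
    (hEH : ∀ i j, E i * H j - H j * E i = if i = j then E i else 0)
    {w : V} (hw : w ∈ whittaker E) (q p : MvPolynomial ι K) :
    aevalOfCommute (fun i => E i - 1) (commute_sub_one hEE) q (aevalOfCommute H hHH p w) =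
      aevalOfCommute H hHH (deltaAeval q p) w := by
  induction q using MvPolynomial.induction_on generalizing p with
  | C a => simp [← algebraMap_eq, deltaAeval]
  | add q r hq hr => simp only [map_add, LinearMap.add_apply, hq, hr]
  | mul_X q i hq =>
    rw [map_mul, map_mul, aevalOfCommute_X, Module.End.mul_apply,
      sub_one_apply_aevalOfCommute hHH hEH (mem_whittaker.mp hw i), hq, deltaAeval_X,
      Module.End.mul_apply]

theorem aevalOfCommute_sub_one_monomial_apply_aevalOfCommute_monomial
    (hEE : ∀ i j, Commute (E i) (E j))
    (hEH : ∀ i j, E i * H j - H j * E i = if i = j then E i else 0)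
    {w : V} (hw : w ∈ whittaker E) {d m : ι →₀ ℕ} (hdeg : d.degree ≤ m.degree) :
    aevalOfCommute (fun i => E i - 1) (commute_sub_one hEE) (monomial m (1 : K))
        (aevalOfCommute H hHH (monomial d (1 : K)) w) =
      if d = m then (m.prod fun _ a => (a.factorial : K)) • w else 0 := by
  rw [aevalOfCommute_sub_one_apply_aevalOfCommute hHH hEE hEH hw,
    deltaAeval_monomial_monomial hdeg]
  split_ifs <;> simp

end Whittaker

section Action

variable {K V ι : Type*} [Field K] [AddCommGroup V] [Module K V]
  {H : ι → Module.End K V} (hHH : ∀ i j, Commute (H i) (H j))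

noncomputable def whittakerAction (E : ι → Module.End K V) :
    MvPolynomial ι K ⊗[K] whittaker E →ₗ[K] V :=
  TensorProduct.lift ((aevalOfCommute H hHH).toLinearMap.compl₂ (whittaker E).subtype)

@[simp]
theorem whittakerAction_tmul (E : ι → Module.End K V) (p : MvPolynomial ι K) (w : whittaker E) :
    whittakerAction hHH E (p ⊗ₜ w) = aevalOfCommute H hHH p w :=
  rfl

variable {E : ι → Module.End K V}

theorem whittakerAction_injective [CharZero K] [DecidableEq ι] (hEE : ∀ i j, Commute (E i) (E j))
    (hEH : ∀ i j, E i * H j - H j * E i = if i = j then E i else 0) :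
    Function.Injective (whittakerAction hHH E) := by
  rw [injective_iff_map_eq_zero]
  intro t ht
  obtain ⟨u, rfl⟩ := (equivFinsuppOfBasisLeft (basisMonomials ι K)).symm.surjective t
  rw [equivFinsuppOfBasisLeft_symm_apply] at ht ⊢
  suffices u = 0 by simp [this]
  by_contra hu
  obtain ⟨m, hm, hmax⟩ :=
    u.support.exists_max_image Finsupp.degree (Finsupp.support_nonempty_iff.mpr hu)
  -- only the top coefficient `u m` survives `(E - 1)^m`, multiplied by `m!`
  have hsum := congrArg
    (aevalOfCommute (fun i => E i - 1) (commute_sub_one hEE) (monomial m (1 : K))) ht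
  simp only [map_finsuppSum, coe_basisMonomials, whittakerAction_tmul, map_zero] at hsum
  rw [Finsupp.sum, Finset.sum_congr rfl fun d hd =>
      aevalOfCommute_sub_one_monomial_apply_aevalOfCommute_monomial hHH hEE hEH (u d).2
        (hmax d hd),
    Finset.sum_ite_eq', if_pos hm, smul_eq_zero, ZeroMemClass.coe_eq_zero] at hsum
  exact hsum.elim (Finsupp.prod_factorial_ne_zero m) (Finsupp.mem_support_iff.mp hm)

theorem exists_aevalOfCommute_sub_one_monomial_eq_zero [Fintype ι]
    (hEE : ∀ i j, Commute (E i) (E j))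
    (hnil : ∀ i (v : V), ∃ N, ((E i - 1) ^ N : Module.End K V) v = 0) (v : V) :
    ∃ N, ∀ d : ι →₀ ℕ, d.degree = N →
      aevalOfCommute (fun i => E i - 1) (commute_sub_one hEE) (monomial d (1 : K)) v = 0 := by
  choose N hN using fun i => hnil i v
  refine ⟨∑ i, N i + 1, fun d hd => ?_⟩
  obtain ⟨i, hi⟩ : ∃ i, N i ≤ d i := by
    by_contra! h
    have := Finset.sum_le_sum fun i (_ : i ∈ Finset.univ) => (h i).le
    rw [← Finsupp.degree_eq_sum] at this
    omega
  have hsplit : monomial d (1 : K) = monomial (d - Finsupp.single i (N i)) 1 * X i ^ N i := by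
    rw [X_pow_eq_monomial, monomial_mul, mul_one,
      tsub_add_cancel_of_le (Finsupp.single_le_iff.mpr hi)]
  rw [hsplit, map_mul, map_pow, aevalOfCommute_X, Module.End.mul_apply, hN i, map_zero]

theorem mem_range_whittakerAction [CharZero K] [DecidableEq ι] [Finite ι]
    (hEE : ∀ i j, Commute (E i) (E j))
    (hEH : ∀ i j, E i * H j - H j * E i = if i = j then E i else 0) (N : ℕ) (v : V)
    (hv : ∀ d : ι →₀ ℕ, d.degree = N →
      aevalOfCommute (fun i => E i - 1) (commute_sub_one hEE) (monomial d (1 : K)) v = 0) :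
    v ∈ LinearMap.range (whittakerAction hHH E) := by
  induction N generalizing v with
  | zero =>
    obtain rfl : v = 0 := by simpa using hv 0 rfl
    exact zero_mem _
  | succ N ih =>
    set D := aevalOfCommute (R := K) (fun i => E i - 1) (commute_sub_one hEE)
    have hwhit : ∀ d : ι →₀ ℕ, d.degree = N →
        D (monomial d (1 : K)) v ∈ whittaker E := by
      refine fun d hd => mem_whittaker.mpr fun i => sub_eq_zero.mp ?_
      have := hv (Finsupp.single i 1 + d) (by simp [hd, add_comm])
      rwa [← mul_one (1 : K), ← monomial_mul, ← X, map_mul, aevalOfCommute_X,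
        Module.End.mul_apply] at this
    set S := (Finsupp.finite_of_degree_eq (σ := ι) N).toFinset
    set c : (ι →₀ ℕ) → K := fun d => d.prod fun _ a => (a.factorial : K)
    set u := ∑ d ∈ S,
      (c d)⁻¹ • aevalOfCommute H hHH (monomial d (1 : K)) (D (monomial d 1) v)
    have hu : u ∈ LinearMap.range (whittakerAction hHH E) := by
      refine Submodule.sum_mem _ fun d hd => Submodule.smul_mem _ _ ?_
      exact ⟨monomial d (1 : K) ⊗ₜ ⟨_, hwhit d (by simpa [S] using hd)⟩, rfl⟩
    have hvu : ∀ r : ι →₀ ℕ, r.degree = N → D (monomial r (1 : K)) (v - u) = 0 := by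
      intro r hr
      have hterm : ∀ d ∈ S, D (monomial r (1 : K)) ((c d)⁻¹ •
          aevalOfCommute H hHH (monomial d (1 : K)) (D (monomial d 1) v)) =
            if d = r then D (monomial r (1 : K)) v else 0 := by
        intro d hd
        have hd : d.degree = N := by simpa [S] using hd
        rw [map_smul, aevalOfCommute_sub_one_monomial_apply_aevalOfCommute_monomial hHH hEE hEH
          (hwhit d hd) (by rw [hd, hr])]
        split_ifs with hdr
        · rw [hdr, smul_smul, inv_mul_cancel₀ (Finsupp.prod_factorial_ne_zero r), one_smul]
        · rw [smul_zero]
      rw [map_sub, map_sum, Finset.sum_congr rfl hterm, Finset.sum_ite_eq',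
        if_pos (by simpa [S] using hr), sub_self]
    simpa using add_mem (ih (v - u) hvu) hu

theorem whittakerAction_surjective [CharZero K] [DecidableEq ι] [Fintype ι]
    (hEE : ∀ i j, Commute (E i) (E j))
    (hEH : ∀ i j, E i * H j - H j * E i = if i = j then E i else 0)
    (hnil : ∀ i (v : V), ∃ N, ((E i - 1) ^ N : Module.End K V) v = 0) :
    Function.Surjective (whittakerAction hHH E) := fun v =>
  let ⟨N, hN⟩ := exists_aevalOfCommute_sub_one_monomial_eq_zero hEE hnil v
  mem_range_whittakerAction hHH hEE hEH N v hN

end Action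

theorem exists_whittaker_basis_of_bijective {K V : Type*} [Field K] [AddCommGroup V]
    [Module K V] {n : ℕ} {H E : Fin n → Module.End K V} (hHH : ∀ i j, Commute (H i) (H j))
    (hbij : Function.Bijective (whittakerAction hHH E))
    (hfd : FiniteDimensional K (whittaker E)) :
    ∃ (k : ℕ) (v : Fin k → V), (∀ a, v a ∈ whittaker E) ∧
      LinearIndependent K (fun p : (Fin n → ℕ) × Fin k =>
        ((List.ofFn fun i => H i ^ p.1 i).prod) (v p.2)) ∧
      Submodule.span K (Set.range fun p : (Fin n → ℕ) × Fin k =>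
        ((List.ofFn fun i => H i ^ p.1 i).prod) (v p.2)) = ⊤ := by
  let b := Module.finBasis K (whittaker E)
  let B := (((basisMonomials (Fin n) K).tensorProduct b).map
    (LinearEquiv.ofBijective _ hbij)).reindex
      (Equiv.prodCongr Finsupp.equivFunOnFinite (Equiv.refl _))
  have hB : ⇑B = fun p : (Fin n → ℕ) × Fin _ =>
      ((List.ofFn fun i => H i ^ p.1 i).prod) (b p.2) := by
    ext p
    simp [B, Module.Basis.tensorProduct_apply', aevalOfCommute_monomial_eq_prod_ofFn]
  exact ⟨_, fun a => b a, fun a => (b a).2, hB ▸ B.linearIndependent, hB ▸ B.span_eq⟩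

section Matrix

variable {R A M : Type*} [CommRing R] [Ring A] [Algebra R A] [AddCommGroup M] [Module R M]
  [LieRingModule A M] [LieModule R A M]

theorem LieModule.toEnd_mul_sub_mul (x y : A) :
    toEnd R A M x * toEnd R A M y - toEnd R A M y * toEnd R A M x =
      toEnd R A M (x * y - y * x) := by
  rw [← LieRing.of_associative_ring_bracket x y, LieHom.map_lie, Ring.lie_def]

theorem LieModule.commute_toEnd_of_commute {x y : A} (h : Commute x y) :
    Commute (toEnd R A M x) (toEnd R A M y) :=
  sub_eq_zero.mp <| by rw [toEnd_mul_sub_mul, h.eq, sub_self, map_zero]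

variable {m : Type*} [DecidableEq m] [Fintype m]

theorem Matrix.commute_single_sub_smul_one (a b : m) (c : R) :
    Commute (single a a (1 : R) - c • 1) (single b b 1 - c • 1) := by
  have hc : ∀ x : Matrix m m R, Commute (c • 1) x := fun x => (Commute.one_left x).smul_left c
  refine (Commute.sub_right ?_ (hc _).symm).sub_left (hc _)
  by_cases hab : a = b
  · exact hab ▸ Commute.refl _
  · exact (single_mul_single_of_ne _ _ _ _ hab 1).trans
      (single_mul_single_of_ne _ _ _ _ (Ne.symm hab) 1).symm

theorem Matrix.commute_single_single_of_ne {r a b : m} (ha : a ≠ r) (hb : b ≠ r) :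
    Commute (single r a (1 : R)) (single r b 1) :=
  (single_mul_single_of_ne _ _ _ _ ha 1).trans (single_mul_single_of_ne _ _ _ _ hb 1).symm

theorem Matrix.single_mul_sub_mul_single {r a b : m} (hb : b ≠ r) (c : R) :
    single r a (1 : R) * (single b b 1 - c • 1) - (single b b 1 - c • 1) * single r a 1 =
      if a = b then single r a 1 else 0 := by
  rw [mul_sub, sub_mul, single_mul_single_of_ne _ _ _ _ hb, mul_smul_one, smul_one_mul]
  split_ifs with hab
  · rw [hab, single_mul_single_same, mul_one]
    abel
  · rw [single_mul_single_of_ne _ _ _ _ hab]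
    abel

end Matrix

/-- Let `M` be an `sl_{n+1}`-module on which each `e_{0i} - 1` acts locally
nilpotently and whose Whittaker subspace `wh(M) = {v : e_{0i} v = v ∀ i}` is
finite-dimensional.  Then `M` is free of finite rank over `U(h_n) = ℂ[h_1,…,h_n]`: there is a
finite family of Whittaker vectors such that the vectors `h^m v_j` (monomials in the `h_i`
applied to the `v_j`) form a `ℂ`-basis of `M`; in particular
`M ≅ ℂ[h_1,…,h_n] ⊗ wh(M)` as vector spaces. -/
theorem statement5 (n : ℕ) (M : Type*) [AddCommGroup M] [Module ℂ M]
    [LieRingModule (Matrix (Fin (n + 1)) (Fin (n + 1)) ℂ) M]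
    [LieModule ℂ (Matrix (Fin (n + 1)) (Fin (n + 1)) ℂ) M]
    (hnil : ∀ (i : Fin n) (v : M), ∃ N : ℕ,
      ((LieModule.toEnd ℂ (Matrix (Fin (n + 1)) (Fin (n + 1)) ℂ) M
          (Matrix.single 0 i.succ 1) - 1) ^ N) v = 0)
    (hfd : FiniteDimensional ℂ
      ↥(⨅ i : Fin n, Module.End.eigenspace
          (LieModule.toEnd ℂ (Matrix (Fin (n + 1)) (Fin (n + 1)) ℂ) M
            (Matrix.single 0 i.succ 1)) 1)) :
    (∃ (k : ℕ) (v : Fin k → M),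
      (∀ a : Fin k, v a ∈ ⨅ i : Fin n, Module.End.eigenspace
          (LieModule.toEnd ℂ (Matrix (Fin (n + 1)) (Fin (n + 1)) ℂ) M
            (Matrix.single 0 i.succ 1)) 1) ∧
      LinearIndependent ℂ (fun p : (Fin n → ℕ) × Fin k =>
        ((List.ofFn fun i : Fin n =>
          (LieModule.toEnd ℂ (Matrix (Fin (n + 1)) (Fin (n + 1)) ℂ) M
            (Matrix.single i.succ i.succ 1 - ((n : ℂ) + 1)⁻¹ • 1)) ^ (p.1 i)).prod) (v p.2)) ∧
      Submodule.span ℂ (Set.range (fun p : (Fin n → ℕ) × Fin k =>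
        ((List.ofFn fun i : Fin n =>
          (LieModule.toEnd ℂ (Matrix (Fin (n + 1)) (Fin (n + 1)) ℂ) M
            (Matrix.single i.succ i.succ 1 - ((n : ℂ) + 1)⁻¹ • 1)) ^ (p.1 i)).prod) (v p.2))) = ⊤) ∧
    Nonempty (M ≃ₗ[ℂ] TensorProduct ℂ (MvPolynomial (Fin n) ℂ)
      ↥(⨅ i : Fin n, Module.End.eigenspace
          (LieModule.toEnd ℂ (Matrix (Fin (n + 1)) (Fin (n + 1)) ℂ) M
            (Matrix.single 0 i.succ 1)) 1)) := by
  set H : Fin n → Module.End ℂ M := fun i =>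
    LieModule.toEnd ℂ (Matrix (Fin (n + 1)) (Fin (n + 1)) ℂ) M
      (Matrix.single i.succ i.succ 1 - ((n : ℂ) + 1)⁻¹ • 1)
  set E : Fin n → Module.End ℂ M := fun i =>
    LieModule.toEnd ℂ (Matrix (Fin (n + 1)) (Fin (n + 1)) ℂ) M (Matrix.single 0 i.succ 1)
  have hHH : ∀ i j, Commute (H i) (H j) := fun i j =>
    LieModule.commute_toEnd_of_commute (Matrix.commute_single_sub_smul_one _ _ _)
  have hEE : ∀ i j, Commute (E i) (E j) := fun i j =>
    LieModule.commute_toEnd_of_commute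
      (Matrix.commute_single_single_of_ne (Fin.succ_ne_zero i) (Fin.succ_ne_zero j))
  have hEH : ∀ i j, E i * H j - H j * E i = if i = j then E i else 0 := fun i j => by
    rw [LieModule.toEnd_mul_sub_mul, Matrix.single_mul_sub_mul_single (Fin.succ_ne_zero j)]
    by_cases hij : i = j <;> simp [hij, E]
  have hbij : Function.Bijective (whittakerAction hHH E) :=
    ⟨whittakerAction_injective hHH hEE hEH, whittakerAction_surjective hHH hEE hEH hnil⟩
  exact ⟨exists_whittaker_basis_of_bijective hHH hbij hfd,
    ⟨(LinearEquiv.ofBijective _ hbij).symm⟩⟩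
end

section
/- In the localization U_S of U(sl_{n+1}) at the Ore set generated by e_{01},…,e_{0n}, the elements x_{ij} = e_{ij} e_{0i} e_{0j}^{-1} − h_i (for 1 ≤ i ≠ j ≤ n) commute with h_k and with e_{0k} for all 1 ≤ k ≤ n. -/
open Matrix

/-!
Everything is a commutator computation in `A`, where `φ` turns brackets of traceless matrices
into ring commutators. Under `ad h_k` each `e_{ab}` (`a ≠ b`) is an eigenvector of weight
`δ_{ka} - δ_{kb}`; weights add under products and change sign under inversion, so
`e_{ij} e_{0i} e_{0j}⁻¹` has weight `(δ_{ki} - δ_{kj}) + (δ_{k0} - δ_{ki}) - (δ_{k0} - δ_{kj}) = 0`,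
and it commutes with `h_k`, as does `h_i`. The `e_{0m}` commute with each other, so `e_{0k}`
commutes with every factor of `x_{ij}` unless `k = i`; then `⁅e_{0i}, e_{ij}⁆ = e_{0j}` and
`⁅e_{0i}, h_i⁆ = e_{0i}` give `⁅e_{0i}, x_{ij}⁆ = e_{0j} e_{0i} e_{0j}⁻¹ - e_{0i} = 0`.
-/

namespace Ring

variable {A : Type*} [Ring A]

theorem lie_mul (a b c : A) : ⁅a, b * c⁆ = ⁅a, b⁆ * c + b * ⁅a, c⁆ := by
  simp only [lie_def]
  noncomm_ring

theorem lie_sub (x y z : A) : ⁅x, y - z⁆ = ⁅x, y⁆ - ⁅x, z⁆ := by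
  simp only [lie_def]
  noncomm_ring

theorem lie_skew (x y : A) : -⁅y, x⁆ = ⁅x, y⁆ := by
  simp only [lie_def, neg_sub]

variable {R : Type*} [CommRing R] [Algebra R A]

theorem lie_sub_smul_one (x y : A) (c : R) : ⁅x, y - c • 1⁆ = ⁅x, y⁆ := by
  simp only [lie_def, mul_sub, sub_mul, mul_smul_comm, smul_mul_assoc, mul_one, one_mul]
  abel

theorem sub_smul_one_lie (x y : A) (c : R) : ⁅y - c • 1, x⁆ = ⁅y, x⁆ := by
  simp only [lie_def, mul_sub, sub_mul, mul_smul_comm, smul_mul_assoc, mul_one, one_mul]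
  abel

theorem lie_mul_eq_smul {h a b : A} {c d : R} (ha : ⁅h, a⁆ = c • a) (hb : ⁅h, b⁆ = d • b) :
    ⁅h, a * b⁆ = (c + d) • (a * b) := by
  rw [lie_mul, ha, hb, add_smul, smul_mul_assoc, mul_smul_comm]

theorem lie_units_inv_eq_smul {h : A} {u : Aˣ} {c : R} (hu : ⁅h, (u : A)⁆ = c • (u : A)) :
    ⁅h, ((u⁻¹ : Aˣ) : A)⁆ = -c • ((u⁻¹ : Aˣ) : A) := by
  have hconj : ⁅h, ((u⁻¹ : Aˣ) : A)⁆ = -(((u⁻¹ : Aˣ) : A) * ⁅h, (u : A)⁆ * ((u⁻¹ : Aˣ) : A)) := by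
    simp only [lie_def, mul_sub, sub_mul, mul_assoc, Units.mul_inv, mul_one]
    simp only [← mul_assoc, Units.inv_mul, one_mul]
    abel
  rw [hconj, hu, mul_smul_comm, smul_mul_assoc, Units.inv_mul, one_mul, neg_smul]

end Ring

namespace Matrix

theorem lie_single_single {ι R : Type*} [DecidableEq ι] [Fintype ι] [Ring R] (a b c d : ι) :
    ⁅single a b (1 : R), single c d (1 : R)⁆ =
      (if b = c then single a d 1 else 0) - (if d = a then single c b 1 else 0) := by
  rw [Ring.lie_def]
  by_cases hbc : b = c <;> by_cases hda : d = a <;> simp [hbc, hda, single_mul_single_of_ne]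

theorem lie_single_diag_single {ι R : Type*} [DecidableEq ι] [Fintype ι] [Ring R] (m a b : ι) :
    ⁅single m m (1 : R), single a b (1 : R)⁆ =
      ((if m = a then 1 else 0) - (if m = b then 1 else 0) : R) • single a b 1 := by
  rw [lie_single_single]
  by_cases hma : m = a <;> by_cases hmb : m = b
  · subst hma hmb; simp
  · subst hma; simp [hmb, Ne.symm hmb]
  · subst hmb; simp [hma]
  · simp [hma, hmb, Ne.symm hmb]

variable (K : Type*) [Field K] (n : ℕ)

def cartanElt (m : Fin (n + 1)) : Matrix (Fin (n + 1)) (Fin (n + 1)) K :=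
  single m m 1 - ((n : K) + 1)⁻¹ • 1

theorem trace_cartanElt [CharZero K] (m : Fin (n + 1)) : (cartanElt K n m).trace = 0 := by
  have hn : (n : K) + 1 ≠ 0 := Nat.cast_add_one_ne_zero n
  simp [cartanElt, trace_sub, trace_smul, trace_one, hn]

end Matrix

section TracelessRepresentation

variable {K A : Type*} [Field K] [Ring A] [Algebra K A] {n : ℕ}
  (φ : Matrix (Fin (n + 1)) (Fin (n + 1)) K →ₗ[K] A)

def xElt (a i j : Fin (n + 1)) (u : Aˣ) : A :=
  φ (single i j 1) * φ (single a i 1) * ((u⁻¹ : Aˣ) : A) - φ (cartanElt K n i)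

variable (hφ : ∀ x y : Matrix (Fin (n + 1)) (Fin (n + 1)) K, x.trace = 0 → y.trace = 0 →
    φ ⁅x, y⁆ = φ x * φ y - φ y * φ x)
include hφ

theorem lie_map_single_map_single {a b c d : Fin (n + 1)} (hab : a ≠ b) (hcd : c ≠ d) :
    ⁅φ (single a b 1), φ (single c d 1)⁆ =
      (if b = c then φ (single a d 1) else 0) - (if d = a then φ (single c b 1) else 0) := by
  rw [Ring.lie_def, ← hφ _ _ (trace_single_eq_of_ne _ _ _ hab) (trace_single_eq_of_ne _ _ _ hcd),
    lie_single_single, map_sub, apply_ite φ, apply_ite φ, map_zero]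

theorem lie_map_cartanElt_map_single [CharZero K] (m : Fin (n + 1)) {a b : Fin (n + 1)}
    (hab : a ≠ b) :
    ⁅φ (cartanElt K n m), φ (single a b 1)⁆ =
      ((if m = a then 1 else 0) - (if m = b then 1 else 0) : K) • φ (single a b 1) := by
  rw [Ring.lie_def, ← hφ _ _ (trace_cartanElt K n m) (trace_single_eq_of_ne _ _ _ hab),
    cartanElt, Ring.sub_smul_one_lie, lie_single_diag_single, map_smul]

theorem commute_map_cartanElt [CharZero K] (m l : Fin (n + 1)) :
    Commute (φ (cartanElt K n m)) (φ (cartanElt K n l)) := by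
  rw [commute_iff_lie_eq, Ring.lie_def, ← hφ _ _ (trace_cartanElt K n m) (trace_cartanElt K n l),
    cartanElt, cartanElt, Ring.sub_smul_one_lie, Ring.lie_sub_smul_one, lie_single_single]
  by_cases hml : m = l <;> simp [hml, eq_comm]

theorem commute_map_single_map_single {a b c : Fin (n + 1)} (hab : a ≠ b) (hac : a ≠ c) :
    Commute (φ (single a b 1)) (φ (single a c 1)) := by
  rw [commute_iff_lie_eq, lie_map_single_map_single φ hφ hab hac, if_neg hab.symm, if_neg hac.symm,
    sub_zero]

variable [CharZero K] {a i j : Fin (n + 1)} (hai : a ≠ i) (haj : a ≠ j) (hij : i ≠ j)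
  {u : Aˣ} (hu : (u : A) = φ (single a j 1))
include hai haj hij hu

theorem commute_xElt_map_cartanElt (m : Fin (n + 1)) :
    Commute (xElt φ a i j u) (φ (cartanElt K n m)) := by
  have hu_wt : ⁅φ (cartanElt K n m), (u : A)⁆ =
      ((if m = a then 1 else 0) - (if m = j then 1 else 0) : K) • (u : A) := by
    rw [hu, lie_map_cartanElt_map_single φ hφ m haj]
  have h_wt_zero : ⁅φ (cartanElt K n m), φ (single i j 1) * φ (single a i 1) * ((u⁻¹ : Aˣ) : A)⁆
      = 0 := by
    rw [Ring.lie_mul_eq_smul (Ring.lie_mul_eq_smul (lie_map_cartanElt_map_single φ hφ m hij)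
      (lie_map_cartanElt_map_single φ hφ m hai)) (Ring.lie_units_inv_eq_smul hu_wt)]
    convert zero_smul K _
    ring
  exact (commute_iff_lie_eq.2 h_wt_zero).symm.sub_left (commute_map_cartanElt φ hφ i m)

theorem commute_xElt_map_single {m : Fin (n + 1)} (ham : a ≠ m) :
    Commute (xElt φ a i j u) (φ (single a m 1)) := by
  have hu_comm : Commute (u : A) (φ (single a m 1)) := by
    rw [hu]
    exact commute_map_single_map_single φ hφ haj ham
  obtain rfl | hmi := eq_or_ne m i
  · have hEij : ⁅φ (single a m 1), φ (single m j 1)⁆ = (u : A) := by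
      rw [lie_map_single_map_single φ hφ hai hij, if_pos rfl, if_neg haj.symm, sub_zero, hu]
    have hEH : ⁅φ (single a m 1), φ (cartanElt K n m)⁆ = φ (single a m 1) := by
      rw [← Ring.lie_skew, lie_map_cartanElt_map_single φ hφ m hai, if_neg hai.symm, if_pos rfl]
      simp
    refine (commute_iff_lie_eq.2 ?_).symm
    rw [xElt, Ring.lie_sub, mul_assoc, Ring.lie_mul, hEij, hEH,
      ((Commute.refl _).mul_right hu_comm.symm.units_inv_right).lie_eq, mul_zero, add_zero,
      ← mul_assoc, hu_comm.eq, mul_assoc, Units.mul_inv, mul_one, sub_self]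
  · have hEij : Commute (φ (single i j 1)) (φ (single a m 1)) := by
      rw [commute_iff_lie_eq, lie_map_single_map_single φ hφ hij ham, if_neg haj.symm,
        if_neg hmi, sub_zero]
    have hEH : Commute (φ (cartanElt K n i)) (φ (single a m 1)) := by
      rw [commute_iff_lie_eq, lie_map_cartanElt_map_single φ hφ i ham, if_neg hai.symm,
        if_neg hmi.symm, sub_zero, zero_smul]
    exact ((hEij.mul_left (commute_map_single_map_single φ hφ hai ham)).mul_left
      hu_comm.units_inv_left).sub_left hEH

end TracelessRepresentation

/-- In any associative `ℂ`-algebra receiving the Lie algebra `sl_{n+1}` (such as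
the localization `U_S` of `U(sl_{n+1})` at the Ore set generated by `e_{01},…,e_{0n}`) in
which the images of the `e_{0j}` are invertible, the elements
`x_{ij} = e_{ij} e_{0i} e_{0j}⁻¹ - h_i` (for `1 ≤ i ≠ j ≤ n`) commute with `h_k` and with
`e_{0k}` for all `1 ≤ k ≤ n`.  Here `h_i = e_{ii} - (1/(n+1)) I_{n+1}`. -/
theorem statement6 (n : ℕ) (A : Type*) [Ring A] [Algebra ℂ A]
    (φ : Matrix (Fin (n + 1)) (Fin (n + 1)) ℂ →ₗ[ℂ] A)
    (hφ : ∀ x y : Matrix (Fin (n + 1)) (Fin (n + 1)) ℂ, x.trace = 0 → y.trace = 0 →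
      φ ⁅x, y⁆ = φ x * φ y - φ y * φ x)
    (u : Fin n → Aˣ) (hu : ∀ j : Fin n, (u j : A) = φ (single 0 j.succ 1))
    (i j : Fin n) (hij : i ≠ j) (k : Fin n) :
    Commute
      (φ (single i.succ j.succ 1) * φ (single 0 i.succ 1) * (((u j)⁻¹ : Aˣ) : A)
        - φ (single i.succ i.succ 1 - ((n : ℂ) + 1)⁻¹ • 1))
      (φ (single k.succ k.succ 1 - ((n : ℂ) + 1)⁻¹ • 1)) ∧
    Commute
      (φ (single i.succ j.succ 1) * φ (single 0 i.succ 1) * (((u j)⁻¹ : Aˣ) : A)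
        - φ (single i.succ i.succ 1 - ((n : ℂ) + 1)⁻¹ • 1))
      (φ (single 0 k.succ 1)) := by
  have h0i : (0 : Fin (n + 1)) ≠ i.succ := (Fin.succ_ne_zero i).symm
  have h0j : (0 : Fin (n + 1)) ≠ j.succ := (Fin.succ_ne_zero j).symm
  have hij' : i.succ ≠ j.succ := (Fin.succ_injective n).ne hij
  exact ⟨commute_xElt_map_cartanElt φ hφ h0i h0j hij' (hu j) k.succ,
    commute_xElt_map_single φ hφ h0i h0j hij' (hu j) (Fin.succ_ne_zero k).symm⟩
end

section
/- The set {e_{ij} − h_i : 1 ≤ i ≠ j ≤ n} ∪ {e_{k0} : 1 ≤ k ≤ n} is a basis of the centralizer in sl_{n+1} of the nilpotent element e = e_{10} + e_{20} + ⋯ + e_{n0}; in particular this centralizer has dimension n² − n + n = n². -/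
/-!
The entries `x (i+1) (j+1)` (`i ≠ j`) and `x (k+1) 0` are coordinates dual to the family, which
gives linear independence. They also determine an element `x` of the centralizer: commuting with
`e` forces `x 0 (j+1) = 0` and makes every row sum of the lower-right block equal to `x 0 0`, so
when those coordinates vanish all diagonal entries equal `x 0 0`, and the trace condition reads
`(n + 1) • x 0 0 = 0`. Hence the centralizer has dimension at most `n²`, and the family, which
lies in it, spans it.
-/

open Matrix

namespace ColumnNilpotent

section Definitions

variable (K : Type*) [Field K] (n : ℕ)

noncomputable def e : Matrix (Fin (n + 1)) (Fin (n + 1)) K :=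
  ∑ k : Fin n, single k.succ 0 1

noncomputable def centralizer : Submodule K (Matrix (Fin (n + 1)) (Fin (n + 1)) K) :=
  LinearMap.ker (traceLinearMap (Fin (n + 1)) K K) ⊓
    LinearMap.ker (LinearMap.mulLeft K (e K n) - LinearMap.mulRight K (e K n))

abbrev BasisIndex : Type := {p : Fin n × Fin n // p.1 ≠ p.2} ⊕ Fin n

noncomputable def family : BasisIndex n → Matrix (Fin (n + 1)) (Fin (n + 1)) K :=
  Sum.elim
    (fun p => single p.1.1.succ p.1.2.succ 1
      - (single p.1.1.succ p.1.1.succ 1 - ((n : K) + 1)⁻¹ • 1))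
    (fun k => single k.succ 0 1)

def coord : Matrix (Fin (n + 1)) (Fin (n + 1)) K →ₗ[K] BasisIndex n → K where
  toFun x := Sum.elim (fun p => x p.1.1.succ p.1.2.succ) (fun k => x k.succ 0)
  map_add' _ _ := by ext (_ | _) <;> rfl
  map_smul' _ _ := by ext (_ | _) <;> rfl

end Definitions

variable {K : Type*} [Field K] {n : ℕ}

lemma mem_centralizer_iff {x : Matrix (Fin (n + 1)) (Fin (n + 1)) K} :
    x ∈ centralizer K n ↔ trace x = 0 ∧ e K n * x = x * e K n := by
  simp [centralizer, sub_eq_zero]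

@[simp] lemma e_mul_apply_zero (x : Matrix (Fin (n + 1)) (Fin (n + 1)) K) (b : Fin (n + 1)) :
    (e K n * x) 0 b = 0 := by
  simp [e, Finset.sum_mul, Matrix.sum_apply, single_mul_apply_of_ne, eq_comm]

@[simp] lemma e_mul_apply_succ (x : Matrix (Fin (n + 1)) (Fin (n + 1)) K) (i : Fin n)
    (b : Fin (n + 1)) : (e K n * x) i.succ b = x 0 b := by
  rw [e, Finset.sum_mul, Matrix.sum_apply, Finset.sum_eq_single i]
  · simp
  · intro k _ hk
    exact single_mul_apply_of_ne _ _ _ _ _ (Fin.succ_injective _ |>.ne (Ne.symm hk)) _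
  · simp

@[simp] lemma mul_e_apply_zero (x : Matrix (Fin (n + 1)) (Fin (n + 1)) K) (a : Fin (n + 1)) :
    (x * e K n) a 0 = ∑ k : Fin n, x a k.succ := by
  simp [e, Finset.mul_sum, Matrix.sum_apply]

@[simp] lemma mul_e_apply_succ (x : Matrix (Fin (n + 1)) (Fin (n + 1)) K) (a : Fin (n + 1))
    (j : Fin n) : (x * e K n) a j.succ = 0 := by
  simp [e, Finset.mul_sum, Matrix.sum_apply, Fin.succ_ne_zero]

lemma e_mul_single_succ (i : Fin n) (j : Fin (n + 1)) (c : K) :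
    e K n * single i.succ j c = 0 := by
  ext a b
  cases a using Fin.cases <;> simp [Fin.succ_ne_zero]

lemma single_succ_mul_e (i : Fin (n + 1)) (j : Fin n) (c : K) :
    single i j.succ c * e K n = single i 0 c := by
  rw [e, Finset.mul_sum, Finset.sum_eq_single j]
  · simp
  · intro k _ hk
    exact single_mul_single_of_ne (h := Fin.succ_injective _ |>.ne (Ne.symm hk)) ..
  · simp

lemma single_zero_mul_e (i : Fin (n + 1)) (c : K) : single i 0 c * e K n = 0 := by
  rw [e, Finset.mul_sum]
  exact Finset.sum_eq_zero fun k _ => single_mul_single_of_ne (h := (Fin.succ_ne_zero k).symm) ..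

lemma e_commute_family (s : BasisIndex n) : e K n * family K n s = family K n s * e K n := by
  rcases s with ⟨⟨i, j⟩, _⟩ | k
  · simp [family, mul_sub, sub_mul, e_mul_single_succ, single_succ_mul_e]
  · simp [family, e_mul_single_succ, single_zero_mul_e]

lemma trace_family (hn : (n + 1 : K) ≠ 0) (s : BasisIndex n) : trace (family K n s) = 0 := by
  rcases s with ⟨⟨i, j⟩, hij⟩ | k
  · simp [family, trace_single_eq_of_ne _ _ _ ((Fin.succ_injective _).ne hij), hn]
  · simp [family, trace_single_eq_of_ne _ _ _ (Fin.succ_ne_zero k)]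

lemma family_mem_centralizer (hn : (n + 1 : K) ≠ 0) (s : BasisIndex n) :
    family K n s ∈ centralizer K n :=
  mem_centralizer_iff.2 ⟨trace_family hn s, e_commute_family s⟩

lemma coord_family (s : BasisIndex n) : coord K n (family K n s) = Pi.single s 1 := by
  ext (⟨⟨i', j'⟩, hij'⟩ | k')
  · rcases s with ⟨⟨i, j⟩, _⟩ | k
    · have : ¬(i' = i ∧ j' = i) := fun h => hij' (h.1.trans h.2.symm)
      simp [coord, family, single_apply, Pi.single_apply, one_apply, hij', eq_comm, this]
    · simp [coord, family, single_apply, (Fin.succ_ne_zero _).symm]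
  · rcases s with _ | k
    · simp [coord, family, single_apply, one_apply, Fin.succ_ne_zero]
    · simp [coord, family, single_apply, Pi.single_apply, eq_comm]

lemma linearIndependent_family : LinearIndependent K (family K n) := by
  refine LinearIndependent.of_comp (coord K n) ?_
  convert (Pi.basisFun K (BasisIndex n)).linearIndependent
  ext1 s
  simp [coord_family]

lemma eq_zero_of_mem_centralizer_of_coord_eq_zero (hn : (n + 1 : K) ≠ 0)
    {x : Matrix (Fin (n + 1)) (Fin (n + 1)) K} (hx : x ∈ centralizer K n) (h : coord K n x = 0) :
    x = 0 := by
  obtain ⟨htrace, hcomm⟩ := mem_centralizer_iff.1 hx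
  have hoff (i j : Fin n) (hij : i ≠ j) : x i.succ j.succ = 0 :=
    congrFun h (Sum.inl ⟨(i, j), hij⟩)
  have hcol (k : Fin n) : x k.succ 0 = 0 := congrFun h (Sum.inr k)
  have hrow (j : Fin n) : x 0 j.succ = 0 := by
    simpa using congrFun (congrFun hcomm j.succ) j.succ
  have hdiag (i : Fin n) : x i.succ i.succ = x 0 0 := by
    have := congrFun (congrFun hcomm i.succ) 0
    rwa [e_mul_apply_succ, mul_e_apply_zero,
      Finset.sum_eq_single i (fun j _ hj => hoff i j (Ne.symm hj)) (by simp), eq_comm] at this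
  have hcorner : x 0 0 = 0 := by
    rw [trace, Fin.sum_univ_succ] at htrace
    simp only [diag_apply, hdiag, Finset.sum_const, Finset.card_univ, Fintype.card_fin,
      nsmul_eq_mul] at htrace
    exact (mul_eq_zero.1 (by linear_combination htrace)).resolve_left hn
  ext a b
  rcases Fin.eq_zero_or_eq_succ a with rfl | ⟨i, rfl⟩ <;>
    rcases Fin.eq_zero_or_eq_succ b with rfl | ⟨j, rfl⟩
  · exact hcorner
  · exact hrow j
  · exact hcol i
  · obtain rfl | hij := eq_or_ne i j
    · exact (hdiag i).trans hcorner
    · exact hoff i j hij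

lemma card_basisIndex : Fintype.card (BasisIndex n) = n ^ 2 := by
  let diag : {p : Fin n × Fin n // p.1 = p.2} ≃ Fin n :=
    ⟨fun p => p.1.1, fun i => ⟨(i, i), rfl⟩, fun p => Subtype.ext (Prod.ext rfl p.2), fun _ => rfl⟩
  let split : BasisIndex n ≃ Fin n × Fin n :=
    (Equiv.sumComm _ _).trans ((diag.symm.sumCongr (Equiv.refl _)).trans (Equiv.sumCompl _))
  rw [Fintype.card_congr split, Fintype.card_prod, Fintype.card_fin, sq]

lemma finrank_centralizer_le (hn : (n + 1 : K) ≠ 0) :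
    Module.finrank K (centralizer K n) ≤ n ^ 2 := by
  have hinj : Function.Injective (coord K n ∘ₗ (centralizer K n).subtype) := by
    rw [← LinearMap.ker_eq_bot, Submodule.eq_bot_iff]
    exact fun x hx => Subtype.ext (eq_zero_of_mem_centralizer_of_coord_eq_zero hn x.2 hx)
  simpa only [Module.finrank_fintype_fun_eq_card, card_basisIndex] using
    LinearMap.finrank_le_finrank_of_injective hinj

lemma span_family (hn : (n + 1 : K) ≠ 0) :
    Submodule.span K (Set.range (family K n)) = centralizer K n := by
  refine Submodule.eq_of_le_of_finrank_le
    (Submodule.span_le.2 (Set.range_subset_iff.2 (family_mem_centralizer hn))) ?_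
  rw [finrank_span_eq_card linearIndependent_family, card_basisIndex]
  exact finrank_centralizer_le hn

lemma finrank_centralizer (hn : (n + 1 : K) ≠ 0) :
    Module.finrank K (centralizer K n) = n ^ 2 := by
  rw [← span_family hn, finrank_span_eq_card linearIndependent_family, card_basisIndex]

end ColumnNilpotent

/-- The family `{e_{ij} - h_i : 1 ≤ i ≠ j ≤ n} ∪ {e_{k0} : 1 ≤ k ≤ n}` is a
basis of the centralizer in `sl_{n+1}` of `e = e_{10} + ⋯ + e_{n0}`: it is linearly
independent and spans `{x : trace x = 0, [x,e] = 0}`; in particular that centralizer has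
dimension `n²`. -/
theorem statement10 (n : ℕ) :
    LinearIndependent ℂ
      (Sum.elim
        (fun p : {p : Fin n × Fin n // p.1 ≠ p.2} =>
          single p.1.1.succ p.1.2.succ (1 : ℂ)
            - (single p.1.1.succ p.1.1.succ 1 - ((n : ℂ) + 1)⁻¹ • 1))
        (fun k : Fin n => single k.succ (0 : Fin (n + 1)) (1 : ℂ))) ∧
    Submodule.span ℂ (Set.range
      (Sum.elim
        (fun p : {p : Fin n × Fin n // p.1 ≠ p.2} =>
          single p.1.1.succ p.1.2.succ (1 : ℂ)
            - (single p.1.1.succ p.1.1.succ 1 - ((n : ℂ) + 1)⁻¹ • 1))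
        (fun k : Fin n => single k.succ (0 : Fin (n + 1)) (1 : ℂ)))) =
      (LinearMap.ker (traceLinearMap (Fin (n + 1)) ℂ ℂ) ⊓
        LinearMap.ker (LinearMap.mulLeft ℂ (∑ k : Fin n, single k.succ (0 : Fin (n + 1)) (1 : ℂ))
          - LinearMap.mulRight ℂ (∑ k : Fin n, single k.succ (0 : Fin (n + 1)) (1 : ℂ)))) ∧
    Module.finrank ℂ
      ↥(LinearMap.ker (traceLinearMap (Fin (n + 1)) ℂ ℂ) ⊓
        LinearMap.ker (LinearMap.mulLeft ℂ (∑ k : Fin n, single k.succ (0 : Fin (n + 1)) (1 : ℂ))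
          - LinearMap.mulRight ℂ (∑ k : Fin n, single k.succ (0 : Fin (n + 1)) (1 : ℂ)))) = n ^ 2 := by
  have hn : (n + 1 : ℂ) ≠ 0 := Nat.cast_add_one_ne_zero n
  exact ⟨ColumnNilpotent.linearIndependent_family, ColumnNilpotent.span_family hn,
    ColumnNilpotent.finrank_centralizer hn⟩
end

section
/- Let Ω = ℂ[d_1,…,d_n] be the D_n-module on which ∂/∂x_i · f(d) = −f(d + e_i) and x_i · f(d) = −f(d − e_i) d_i. Then Ω is a simple module over the Weyl algebra D_n, isomorphic to D_n / Σ_{i=1}^n D_n(∂/∂x_i + 1). -/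
open MvPolynomial

/-- Generators of the Weyl algebra `D_n`: `x_i` and `∂_i`. -/
inductive WGen (n : ℕ)
  | x (i : Fin n)
  | d (i : Fin n)

/-- The defining relations of the Weyl algebra `D_n`: the `x_i` commute, the `∂_i` commute,
and `∂_i x_j - x_j ∂_i = δ_{ij}`. -/
inductive WRel (n : ℕ) : FreeAlgebra ℂ (WGen n) → FreeAlgebra ℂ (WGen n) → Prop
  | xx (i j : Fin n) : WRel n (FreeAlgebra.ι ℂ (WGen.x i) * FreeAlgebra.ι ℂ (WGen.x j))
      (FreeAlgebra.ι ℂ (WGen.x j) * FreeAlgebra.ι ℂ (WGen.x i))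
  | dd (i j : Fin n) : WRel n (FreeAlgebra.ι ℂ (WGen.d i) * FreeAlgebra.ι ℂ (WGen.d j))
      (FreeAlgebra.ι ℂ (WGen.d j) * FreeAlgebra.ι ℂ (WGen.d i))
  | dx (i j : Fin n) : WRel n (FreeAlgebra.ι ℂ (WGen.d i) * FreeAlgebra.ι ℂ (WGen.x j))
      (FreeAlgebra.ι ℂ (WGen.x j) * FreeAlgebra.ι ℂ (WGen.d i) + if i = j then 1 else 0)

/-- The Weyl algebra `D_n`, presented by generators and relations. -/
abbrev Weyl (n : ℕ) := RingQuot (WRel n)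

/-- The shift operator `f(d) ↦ f(d + c e_i)` on `Ω = ℂ[d_1,…,d_n]`. -/
noncomputable def shiftOp (n : ℕ) (c : ℂ) (i : Fin n) :
    Module.End ℂ (MvPolynomial (Fin n) ℂ) :=
  (MvPolynomial.aeval fun t => MvPolynomial.X t + if t = i then MvPolynomial.C c else 0).toLinearMap

lemma shiftOp_mul (n : ℕ) (c : ℂ) (i : Fin n) (p q : MvPolynomial (Fin n) ℂ) :
    shiftOp n c i (p * q) = shiftOp n c i p * shiftOp n c i q := by
  simp [shiftOp]

lemma shiftOp_X (n : ℕ) (c : ℂ) (i t : Fin n) :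
    shiftOp n c i (X t) = X t + if t = i then C c else 0 := by
  simp [shiftOp]

lemma shiftOp_C (n : ℕ) (c : ℂ) (i : Fin n) (a : ℂ) :
    shiftOp n c i (C a) = C a := by
  simp [shiftOp]

lemma shiftOp_comm (n : ℕ) (c c' : ℂ) (i j : Fin n) (p : MvPolynomial (Fin n) ℂ) :
    shiftOp n c i (shiftOp n c' j p) = shiftOp n c' j (shiftOp n c i p) := by
  induction p using MvPolynomial.induction_on with
  | C a => simp [shiftOp_C]
  | add p q hp hq => simp [map_add, hp, hq]
  | mul_X p t hp =>
      simp only [shiftOp_mul, shiftOp_X, hp, map_add,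
        apply_ite (shiftOp n c i), apply_ite (shiftOp n c' j), shiftOp_C, map_zero]
      ring

lemma shiftOp_add (n : ℕ) (c c' : ℂ) (i : Fin n) (p : MvPolynomial (Fin n) ℂ) :
    shiftOp n c i (shiftOp n c' i p) = shiftOp n (c + c') i p := by
  induction p using MvPolynomial.induction_on with
  | C a => simp [shiftOp_C]
  | add p q hp hq => simp [map_add, hp, hq]
  | mul_X p t hp =>
      simp only [shiftOp_mul, shiftOp_X, hp, map_add,
        apply_ite (shiftOp n c i), shiftOp_C, map_zero]
      split_ifs with h
      · ring
      · ring

lemma shiftOp_zero (n : ℕ) (i : Fin n) (p : MvPolynomial (Fin n) ℂ) :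
    shiftOp n 0 i p = p := by
  induction p using MvPolynomial.induction_on with
  | C a => simp [shiftOp_C]
  | add p q hp hq => simp [map_add, hp, hq]
  | mul_X p t hp => simp [shiftOp_mul, shiftOp_X, hp]

lemma shiftOp_cancel (n : ℕ) (c : ℂ) (i : Fin n) (p : MvPolynomial (Fin n) ℂ) :
    shiftOp n c i (shiftOp n (-c) i p) = p := by
  rw [shiftOp_add, add_neg_cancel, shiftOp_zero]

noncomputable def wf (n : ℕ) : WGen n → Module.End ℂ (MvPolynomial (Fin n) ℂ)
  | WGen.x i => -(LinearMap.mulLeft ℂ (X i) ∘ₗ shiftOp n (-1) i)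
  | WGen.d i => -(shiftOp n 1 i)

lemma wrel_preserved (n : ℕ) : ∀ ⦃a b : FreeAlgebra ℂ (WGen n)⦄, WRel n a b →
    FreeAlgebra.lift ℂ (wf n) a = FreeAlgebra.lift ℂ (wf n) b := by
  intro a b h
  induction h with
  | xx i j =>
      simp only [map_mul, FreeAlgebra.lift_ι_apply, wf]
      refine LinearMap.ext fun p => ?_
      simp only [Module.End.mul_apply, LinearMap.neg_apply, LinearMap.comp_apply,
        LinearMap.mulLeft_apply, map_neg, mul_neg, neg_neg]
      rw [shiftOp_mul, shiftOp_mul, shiftOp_X, shiftOp_X, shiftOp_comm]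
      split_ifs <;> simp_all <;> ring
  | dd i j =>
      simp only [map_mul, FreeAlgebra.lift_ι_apply, wf]
      refine LinearMap.ext fun p => ?_
      simp only [Module.End.mul_apply, LinearMap.neg_apply, map_neg, neg_neg]
      rw [shiftOp_comm]
  | dx i j =>
      simp only [map_mul, map_add, FreeAlgebra.lift_ι_apply, wf]
      by_cases hij : i = j
      · subst hij
        rw [if_pos rfl]
        refine LinearMap.ext fun p => ?_
        simp only [map_one, LinearMap.add_apply, Module.End.mul_apply, LinearMap.neg_apply,
          LinearMap.comp_apply, LinearMap.mulLeft_apply, map_neg, mul_neg, neg_neg,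
          Module.End.one_apply]
        rw [shiftOp_mul, shiftOp_X, shiftOp_cancel, shiftOp_add]
        rw [neg_add_cancel, shiftOp_zero]
        simp
        ring
      · rw [if_neg hij]
        refine LinearMap.ext fun p => ?_
        simp only [map_zero, LinearMap.add_apply, Module.End.mul_apply, LinearMap.neg_apply,
          LinearMap.comp_apply, LinearMap.mulLeft_apply, map_neg, mul_neg, neg_neg,
          LinearMap.zero_apply, add_zero]
        rw [shiftOp_mul, shiftOp_X, if_neg (fun h => hij h.symm), shiftOp_comm]
        ring

/-- The `D_n`-action on `Ω`: `x_i · f(d) = -f(d - e_i) d_i`, `∂_i · f(d) = -f(d + e_i)`. -/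
noncomputable def weylRep (n : ℕ) : Weyl n →ₐ[ℂ] Module.End ℂ (MvPolynomial (Fin n) ℂ) :=
  RingQuot.liftAlgHom ℂ ⟨FreeAlgebra.lift ℂ (wf n), wrel_preserved n⟩

/-- `Ω = ℂ[d_1,…,d_n]` as a module over the Weyl algebra `D_n`. -/
noncomputable instance weylModuleOmega (n : ℕ) : Module (Weyl n) (MvPolynomial (Fin n) ℂ) :=
  Module.compHom _ (weylRep n).toRingHom

/-!
Evaluating polynomials at the pairwise commuting Euler operators `θ_i = x_i ∂_i` embeds `ℂ[d]`
into `D_n`, and `p(θ)` acts on `Ω` as multiplication by `p`, while `∂_i` acts as minus the shift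
`d ↦ d + e_i`. Commuting the generators of `D_n` to the right of `ℂ[θ]` gives
`D_n = ℂ[θ] + I` with `I = Σ D_n (∂_i + 1)`; since `I` kills `1` and `p(θ) • 1 = p`, the map
`w ↦ w • 1` is onto with kernel exactly `I`.

A nonzero submodule of `Ω` is an ideal of `ℂ[d]` stable under the shifts, so its zero locus is
stable under translation by `ℕⁿ`. A polynomial vanishing on a translate of `ℕⁿ` is zero, hence the
zero locus is empty and the Nullstellensatz puts `1` in the submodule.
-/

theorem MvPolynomial.mul_algHom_eq_algHom_mul {σ R B : Type*} [CommSemiring R] [Semiring B]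
    [Algebra R B] {f g : MvPolynomial σ R →ₐ[R] B} {b : B} (h : ∀ i, b * f (X i) = g (X i) * b)
    (p : MvPolynomial σ R) : b * f p = g p * b := by
  induction p using MvPolynomial.induction_on with
  | C a => rw [algHom_C, algHom_C, Algebra.commutes]
  | add p q hp hq => rw [map_add, map_add, mul_add, add_mul, hp, hq]
  | mul_X p i hp => rw [map_mul, map_mul, ← mul_assoc, hp, mul_assoc, h, mul_assoc]

theorem AddSubmonoid.natCast_mem_of_forall_single_one_mem {ι R : Type*} [Fintype ι]
    [DecidableEq ι] [AddCommMonoidWithOne R] (P : AddSubmonoid (ι → R))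
    (h : ∀ i, Pi.single i 1 ∈ P) (m : ι → ℕ) : (fun i => (m i : R)) ∈ P := by
  have hm : (fun i => (m i : R)) = ∑ i, m i • Pi.single i 1 := by
    ext j
    simp [Finset.sum_apply, Pi.single_apply]
  rw [hm]
  exact P.sum_mem fun i _ => P.nsmul_mem (h i) _

noncomputable def shiftAlgHom (n : ℕ) (c : ℂ) (i : Fin n) :
    MvPolynomial (Fin n) ℂ →ₐ[ℂ] MvPolynomial (Fin n) ℂ :=
  aeval fun t => X t + if t = i then C c else 0

lemma shiftAlgHom_apply {n : ℕ} (c : ℂ) (i : Fin n) (p : MvPolynomial (Fin n) ℂ) :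
    shiftAlgHom n c i p = shiftOp n c i p := rfl

lemma eval_shiftOp {n : ℕ} (c : ℂ) (i : Fin n) (f : MvPolynomial (Fin n) ℂ) (x : Fin n → ℂ) :
    eval x (shiftOp n c i f) = eval (x + Pi.single i c) f := by
  induction f using MvPolynomial.induction_on with
  | C a => simp [shiftOp_C]
  | add p q hp hq => simp only [map_add, hp, hq]
  | mul_X p t hp => simp [shiftOp_mul, shiftOp_X, hp, Pi.single_apply, apply_ite (eval x)]

lemma eq_top_of_forall_shiftOp_mem {n : ℕ} (I : Ideal (MvPolynomial (Fin n) ℂ)) (hI : I ≠ ⊥)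
    (hshift : ∀ i, ∀ f ∈ I, shiftOp n 1 i f ∈ I) : I = ⊤ := by
  rw [← Ideal.radical_eq_top, ← vanishingIdeal_zeroLocus_eq_radical (K := ℂ)]
  suffices zeroLocus ℂ I = ∅ by rw [this, vanishingIdeal_empty]
  refine Set.eq_empty_of_forall_notMem fun x hx => hI ?_
  let periods : AddSubmonoid (Fin n → ℂ) :=
    { carrier := {v | ∀ z ∈ zeroLocus ℂ I, z + v ∈ zeroLocus ℂ I}
      zero_mem' := by simp
      add_mem' := fun hu hv z hz => by simpa [add_assoc] using hv _ (hu z hz) }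
  have single_mem (i : Fin n) : Pi.single i 1 ∈ periods := fun z hz =>
    mem_zeroLocus_iff.mpr fun f hf => by
      simpa [eval_shiftOp] using mem_zeroLocus_iff.mp hz _ (hshift i f hf)
  refine (Submodule.eq_bot_iff I).mpr fun f hf => ?_
  refine funext_set (fun j => Set.range fun k : ℕ => x j + k)
    (fun j => Set.infinite_range_of_injective ((add_right_injective _).comp Nat.cast_injective))
    fun y hy => ?_
  choose m hm using fun j => hy j (Set.mem_univ j)
  have hxy : y = x + fun j => (m j : ℂ) := funext fun j => (hm j).symm
  rw [hxy, map_zero]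
  exact mem_zeroLocus_iff.mp
    (periods.natCast_mem_of_forall_single_one_mem single_mem m x hx) f hf

namespace Weyl

variable {n : ℕ}

noncomputable abbrev x (i : Fin n) : Weyl n :=
  RingQuot.mkAlgHom ℂ (WRel n) (FreeAlgebra.ι ℂ (WGen.x i))

noncomputable abbrev d (i : Fin n) : Weyl n :=
  RingQuot.mkAlgHom ℂ (WRel n) (FreeAlgebra.ι ℂ (WGen.d i))

noncomputable abbrev euler (i : Fin n) : Weyl n := x i * d i

lemma x_mul_x (i j : Fin n) : x i * x j = x j * x i := by
  simpa only [map_mul] using RingQuot.mkAlgHom_rel ℂ (WRel.xx i j)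

lemma d_mul_d (i j : Fin n) : d i * d j = d j * d i := by
  simpa only [map_mul] using RingQuot.mkAlgHom_rel ℂ (WRel.dd i j)

lemma d_mul_x (i j : Fin n) : d i * x j = x j * d i + if i = j then 1 else 0 := by
  simpa only [map_mul, map_add, apply_ite (RingQuot.mkAlgHom ℂ (WRel n)), map_one, map_zero]
    using RingQuot.mkAlgHom_rel ℂ (WRel.dx i j)

lemma d_mul_x_of_ne {i j : Fin n} (h : i ≠ j) : d i * x j = x j * d i := by
  rw [d_mul_x, if_neg h, add_zero]

lemma euler_mul_euler (i j : Fin n) : euler i * euler j = euler j * euler i := by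
  rcases eq_or_ne i j with rfl | h
  · rfl
  · have hsplit {i j : Fin n} (h : i ≠ j) : euler i * euler j = x i * x j * (d i * d j) := by
      simp only [euler, mul_assoc, ← mul_assoc (d _), d_mul_x_of_ne h]
    rw [hsplit h, hsplit h.symm, x_mul_x, d_mul_d]

noncomputable def eulerSubalgebra (n : ℕ) : Subalgebra ℂ (Weyl n) :=
  Algebra.adjoin ℂ (Set.range (euler (n := n)))

instance : IsMulCommutative (eulerSubalgebra n) :=
  Algebra.isMulCommutative_adjoin ℂ (by rintro _ ⟨i, rfl⟩ _ ⟨j, rfl⟩; exact euler_mul_euler i j)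

open scoped IsMulCommutative in
/-- `aeval` needs a commutative target, hence the detour through the subalgebra generated by
the `θ_i`. -/
noncomputable def aevalEuler (n : ℕ) : MvPolynomial (Fin n) ℂ →ₐ[ℂ] Weyl n :=
  (eulerSubalgebra n).val.comp
    (aeval fun i => ⟨euler i, Algebra.subset_adjoin (Set.mem_range_self i)⟩)

lemma aevalEuler_X (i : Fin n) : aevalEuler n (X i) = euler i := by
  simp [aevalEuler]

lemma smul_def (w : Weyl n) (q : MvPolynomial (Fin n) ℂ) : w • q = weylRep n w q := rfl

lemma weylRep_mkAlgHom_ι (g : WGen n) :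
    weylRep n (RingQuot.mkAlgHom ℂ (WRel n) (FreeAlgebra.ι ℂ g)) = wf n g := by
  rw [weylRep, RingQuot.liftAlgHom_mkAlgHom_apply, FreeAlgebra.lift_ι_apply]

lemma d_smul (i : Fin n) (q : MvPolynomial (Fin n) ℂ) : d i • q = -shiftOp n 1 i q := by
  rw [smul_def, weylRep_mkAlgHom_ι]; rfl

lemma x_smul (i : Fin n) (q : MvPolynomial (Fin n) ℂ) :
    x i • q = -(X i * shiftOp n (-1) i q) := by
  rw [smul_def, weylRep_mkAlgHom_ι]; rfl

lemma euler_smul (i : Fin n) (q : MvPolynomial (Fin n) ℂ) : euler i • q = X i * q := by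
  rw [mul_smul, d_smul, smul_neg, x_smul, neg_neg, shiftOp_add, neg_add_cancel, shiftOp_zero]

lemma weylRep_comp_aevalEuler :
    (weylRep n).comp (aevalEuler n) = Algebra.lmul ℂ (MvPolynomial (Fin n) ℂ) :=
  MvPolynomial.algHom_ext fun i => LinearMap.ext fun q => by
    rw [AlgHom.comp_apply, aevalEuler_X]; exact euler_smul i q

lemma aevalEuler_smul (p q : MvPolynomial (Fin n) ℂ) : aevalEuler n p • q = p * q :=
  congr($weylRep_comp_aevalEuler p q)

lemma d_mul_euler (j t : Fin n) : d j * euler t = (euler t + if t = j then 1 else 0) * d j := by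
  rcases eq_or_ne t j with rfl | h
  · rw [if_pos rfl, ← mul_assoc, d_mul_x, if_pos rfl]
  · rw [if_neg h, add_zero, ← mul_assoc, d_mul_x_of_ne h.symm, mul_assoc, d_mul_d, mul_assoc]

lemma x_mul_euler (j t : Fin n) : x j * (euler t + if t = j then 1 else 0) = euler t * x j := by
  rcases eq_or_ne t j with rfl | h
  · rw [if_pos rfl, mul_add, mul_one, mul_assoc, d_mul_x, if_pos rfl, mul_add, mul_one]
  · rw [if_neg h, add_zero, ← mul_assoc, x_mul_x, mul_assoc, ← d_mul_x_of_ne h, mul_assoc]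

lemma aevalEuler_shiftOp_X (j t : Fin n) :
    aevalEuler n (shiftOp n 1 j (X t)) = euler t + if t = j then 1 else 0 := by
  rw [shiftOp_X, map_add, aevalEuler_X, apply_ite (aevalEuler n), map_zero, C_1, map_one]

lemma d_mul_aevalEuler (j : Fin n) (p : MvPolynomial (Fin n) ℂ) :
    d j * aevalEuler n p = aevalEuler n (shiftOp n 1 j p) * d j :=
  MvPolynomial.mul_algHom_eq_algHom_mul (g := (aevalEuler n).comp (shiftAlgHom n 1 j))
    (fun t => by
      rw [AlgHom.comp_apply, shiftAlgHom_apply, aevalEuler_shiftOp_X, aevalEuler_X]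
      exact d_mul_euler j t) p

lemma x_mul_aevalEuler (j : Fin n) (p : MvPolynomial (Fin n) ℂ) :
    x j * aevalEuler n (shiftOp n 1 j p) = aevalEuler n p * x j :=
  MvPolynomial.mul_algHom_eq_algHom_mul (f := (aevalEuler n).comp (shiftAlgHom n 1 j))
    (fun t => by
      rw [AlgHom.comp_apply, shiftAlgHom_apply, aevalEuler_shiftOp_X, aevalEuler_X]
      exact x_mul_euler j t) p

noncomputable def dAddOneIdeal (n : ℕ) : Submodule (Weyl n) (Weyl n) :=
  Submodule.span (Weyl n) {w | ∃ i : Fin n, w = d i + 1}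

lemma mul_d_add_one_mem (w : Weyl n) (i : Fin n) : w * (d i + 1) ∈ dAddOneIdeal n :=
  (dAddOneIdeal n).smul_mem w (Submodule.subset_span ⟨i, rfl⟩)

lemma exists_sub_aevalEuler_mem (w : Weyl n) : ∃ p, w - aevalEuler n p ∈ dAddOneIdeal n := by
  set I := dAddOneIdeal n
  set T : Submodule ℂ (Weyl n) := LinearMap.range (aevalEuler n).toLinearMap ⊔ I.restrictScalars ℂ
  have aevalEuler_mem (p) : aevalEuler n p ∈ T := Submodule.mem_sup_left ⟨p, rfl⟩
  have mem_of_mem_I (u) (hu : u ∈ I) : u ∈ T := Submodule.mem_sup_right hu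
  have mem_of_add_mem_I (a p) (h : a + aevalEuler n p ∈ I) : a ∈ T :=
    (T.add_mem_iff_left (aevalEuler_mem p)).mp (mem_of_mem_I _ h)
  have gen_mul_mem (g : WGen n) (t) (ht : t ∈ T) :
      RingQuot.mkAlgHom ℂ (WRel n) (FreeAlgebra.ι ℂ g) * t ∈ T := by
    obtain ⟨_, ⟨p, rfl⟩, u, hu, rfl⟩ := Submodule.mem_sup.mp ht
    rw [mul_add]
    refine T.add_mem ?_ (mem_of_mem_I _ (I.smul_mem _ hu))
    change _ * aevalEuler n p ∈ T
    cases g with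
    | x j =>
      rw [← shiftOp_cancel n 1 j p, x_mul_aevalEuler]
      -- `x_j + θ_j = x_j (∂_j + 1)`
      refine mem_of_add_mem_I _ (shiftOp n (-1) j p * X j) ?_
      rw [map_mul, aevalEuler_X, ← mul_add, add_comm, ← mul_add_one, ← mul_assoc]
      exact mul_d_add_one_mem _ j
    | d j =>
      rw [d_mul_aevalEuler]
      exact mem_of_add_mem_I _ _ (by rw [← mul_add_one]; exact mul_d_add_one_mem _ j)
  have mul_mem (w t) (ht : t ∈ T) : w * t ∈ T := by
    obtain ⟨f, rfl⟩ := RingQuot.mkAlgHom_surjective ℂ (WRel n) w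
    induction f using FreeAlgebra.induction generalizing t with
    | grade0 r => rw [AlgHom.commutes, ← Algebra.smul_def]; exact T.smul_mem r ht
    | grade1 g => exact gen_mul_mem g t ht
    | mul a b ha hb => rw [map_mul, mul_assoc]; exact ha _ (hb _ ht)
    | add a b ha hb => rw [map_add, add_mul]; exact T.add_mem (ha _ ht) (hb _ ht)
  have hw : w ∈ T := by simpa using mul_mem w 1 (by simpa using aevalEuler_mem 1)
  obtain ⟨_, ⟨p, rfl⟩, u, hu, rfl⟩ := Submodule.mem_sup.mp hw
  exact ⟨p, by simpa using hu⟩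

lemma dAddOneIdeal_le_ker :
    dAddOneIdeal n ≤
      LinearMap.ker (LinearMap.toSpanSingleton (Weyl n) _ (1 : MvPolynomial (Fin n) ℂ)) := by
  rw [dAddOneIdeal, Submodule.span_le]
  rintro _ ⟨i, rfl⟩
  simp [add_smul, d_smul, shiftOp]

lemma ker_toSpanSingleton_one :
    LinearMap.ker (LinearMap.toSpanSingleton (Weyl n) _ (1 : MvPolynomial (Fin n) ℂ)) =
      dAddOneIdeal n := by
  refine le_antisymm (fun w hw => ?_) dAddOneIdeal_le_ker
  obtain ⟨p, hp⟩ := exists_sub_aevalEuler_mem w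
  have hp0 := dAddOneIdeal_le_ker hp
  rw [LinearMap.mem_ker, map_sub, hw, LinearMap.toSpanSingleton_apply, aevalEuler_smul, mul_one,
    zero_sub, neg_eq_zero] at hp0
  simpa [hp0] using hp

lemma toSpanSingleton_one_surjective :
    Function.Surjective (LinearMap.toSpanSingleton (Weyl n) _ (1 : MvPolynomial (Fin n) ℂ)) :=
  fun q => ⟨aevalEuler n q, by simp [aevalEuler_smul]⟩

noncomputable def quotientDAddOneIdealEquiv (n : ℕ) :
    (Weyl n ⧸ dAddOneIdeal n) ≃ₗ[Weyl n] MvPolynomial (Fin n) ℂ :=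
  (Submodule.quotEquivOfEq _ _ ker_toSpanSingleton_one.symm).trans
    (LinearMap.quotKerEquivOfSurjective _ toSpanSingleton_one_surjective)

def idealOfSubmodule (N : Submodule (Weyl n) (MvPolynomial (Fin n) ℂ)) :
    Ideal (MvPolynomial (Fin n) ℂ) where
  carrier := N
  add_mem' := N.add_mem
  zero_mem' := N.zero_mem
  smul_mem' p q hq := by simpa [aevalEuler_smul] using N.smul_mem (aevalEuler n p) hq

lemma isSimpleModule : IsSimpleModule (Weyl n) (MvPolynomial (Fin n) ℂ) := by
  refine { eq_bot_or_eq_top := fun N => or_iff_not_imp_left.mpr fun hN => ?_ }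
  have hJ : idealOfSubmodule N = ⊤ := by
    refine eq_top_of_forall_shiftOp_mem _ (fun h => hN ?_) fun i f hf => ?_
    · rw [Submodule.eq_bot_iff] at h ⊢
      exact h
    · have := N.neg_mem (N.smul_mem (d i) hf)
      rwa [d_smul, neg_neg] at this
  have h1 : (1 : MvPolynomial (Fin n) ℂ) ∈ N := (Ideal.eq_top_iff_one _).mp hJ
  exact Submodule.eq_top_iff'.mpr fun q => by
    simpa [aevalEuler_smul] using N.smul_mem (aevalEuler n q) h1

end Weyl

/-- `Ω = ℂ[d_1,…,d_n]` with `∂_i · f(d) = -f(d + e_i)` and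
`x_i · f(d) = -f(d - e_i) d_i` is a simple module over the Weyl algebra `D_n`, isomorphic to
`D_n / Σ_{i=1}^n D_n (∂_i + 1)`. -/
theorem statement14 (n : ℕ) :
    IsSimpleModule (Weyl n) (MvPolynomial (Fin n) ℂ) ∧
    Nonempty
      ((Weyl n ⧸ Submodule.span (Weyl n)
          {w : Weyl n | ∃ i : Fin n,
            w = RingQuot.mkAlgHom ℂ (WRel n) (FreeAlgebra.ι ℂ (WGen.d i)) + 1})
        ≃ₗ[Weyl n] MvPolynomial (Fin n) ℂ) :=
  ⟨Weyl.isSimpleModule, ⟨Weyl.quotientDAddOneIdealEquiv n⟩⟩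
end

section
/- Let a_{n−1} = span{E_{ij} − E_{ii} : 1 ≤ i ≤ n−1, 1 ≤ j ≤ n} ⊂ gl_n. Then a_{n−1} is a Lie subalgebra of gl_n, and the linear map a_{n−1} → gl_{n−1} sending Ẽ_{ij} := E_{ij} − E_{in} ↦ E_{ij} for 1 ≤ i,j ≤ n−1 is a Lie algebra isomorphism. -/
/-!
The map `gl_m → gl_{m+1}`, `E_ij ↦ E_ij - E_{i,m+1}`, is `X ↦ P X Q`, where `P` embeds `R^m` as
the first `m` coordinates of `R^{m+1}` and `Q v = (v_a - v_{m+1})_a`. Since `Q P = 1`, such a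
sandwich is multiplicative, hence a Lie algebra map, and injective (`X = Q (P X Q) P`). Its image
is spanned by the `E_ij - E_{i,m+1}`, which span the same space as the `E_ij - E_ii`: both are all
differences of two matrix units in a common row `i ≤ m`.
-/

open Matrix

section Sandwich

variable {R l n : Type*} [CommRing R] [Fintype n]

def sandwich (P : Matrix l n R) (Q : Matrix n l R) : Matrix n n R →ₗ[R] Matrix l l R where
  toFun X := P * X * Q
  map_add' X Y := by rw [Matrix.mul_add, Matrix.add_mul]
  map_smul' c X := by rw [Matrix.mul_smul, Matrix.smul_mul, RingHom.id_apply]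

variable {P : Matrix l n R} {Q : Matrix n l R}

lemma sandwich_apply (X : Matrix n n R) : sandwich P Q X = P * X * Q := rfl

variable [Fintype l] [DecidableEq n]

lemma sandwich_mul (hQP : Q * P = 1) (X Y : Matrix n n R) :
    sandwich P Q (X * Y) = sandwich P Q X * sandwich P Q Y := by
  simp only [sandwich_apply, Matrix.mul_assoc]
  rw [← Matrix.mul_assoc Q P, hQP, Matrix.one_mul]

lemma mul_sandwich_mul (hQP : Q * P = 1) (X : Matrix n n R) : Q * sandwich P Q X * P = X := by
  simp only [sandwich_apply, ← Matrix.mul_assoc, hQP, Matrix.one_mul]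
  rw [Matrix.mul_assoc, hQP, Matrix.mul_one]

lemma sandwich_injective (hQP : Q * P = 1) : Function.Injective (sandwich P Q) :=
  Function.LeftInverse.injective (g := fun A => Q * A * P) (mul_sandwich_mul hQP)

lemma sandwich_lie (hQP : Q * P = 1) (X Y : Matrix n n R) :
    sandwich P Q ⁅X, Y⁆ = ⁅sandwich P Q X, sandwich P Q Y⁆ := by
  rw [Ring.lie_def, Ring.lie_def, map_sub, sandwich_mul hQP, sandwich_mul hQP]

end Sandwich

section

variable (R : Type*) [CommRing R] (m : ℕ)

def castSuccMatrix : Matrix (Fin (m + 1)) (Fin m) R :=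
  of fun a b => if a = b.castSucc then 1 else 0

def subLastMatrix : Matrix (Fin m) (Fin (m + 1)) R :=
  of fun a c => (if c = a.castSucc then 1 else 0) - if c = Fin.last m then 1 else 0

def rowDifferenceSpan : Submodule R (Matrix (Fin (m + 1)) (Fin (m + 1)) R) :=
  Submodule.span R {A | ∃ (i : Fin m) (j : Fin (m + 1)),
    A = single i.castSucc j 1 - single i.castSucc i.castSucc 1}

variable {R m}

lemma subLastMatrix_mul_castSuccMatrix : subLastMatrix R m * castSuccMatrix R m = 1 := by
  ext a b
  simp [subLastMatrix, castSuccMatrix, Matrix.mul_apply, Matrix.one_apply, eq_comm]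

lemma sandwich_single (i j : Fin m) :
    sandwich (castSuccMatrix R m) (subLastMatrix R m) (single i j 1) =
      single i.castSucc j.castSucc 1 - single i.castSucc (Fin.last m) 1 := by
  ext a b
  simp [sandwich_apply, castSuccMatrix, subLastMatrix, single_apply, Matrix.mul_apply, ite_and,
    eq_comm, ite_sub_ite]

lemma single_sub_single_mem_rowDifferenceSpan (i : Fin m) (j k : Fin (m + 1)) :
    single i.castSucc j 1 - single i.castSucc k 1 ∈ rowDifferenceSpan R m := by
  have hmem (j : Fin (m + 1)) : single i.castSucc j 1 - single i.castSucc i.castSucc 1 ∈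
      rowDifferenceSpan R m := Submodule.subset_span ⟨i, j, rfl⟩
  simpa only [sub_sub_sub_cancel_right] using Submodule.sub_mem _ (hmem j) (hmem k)

lemma single_sub_single_last_mem_range (i : Fin m) (j : Fin (m + 1)) :
    single i.castSucc j 1 - single i.castSucc (Fin.last m) (1 : R) ∈
      LinearMap.range (sandwich (castSuccMatrix R m) (subLastMatrix R m)) := by
  induction j using Fin.lastCases with
  | last => simp
  | cast j => exact ⟨single i j 1, sandwich_single i j⟩

lemma range_sandwich_castSuccMatrix_subLastMatrix :
    LinearMap.range (sandwich (castSuccMatrix R m) (subLastMatrix R m)) =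
      rowDifferenceSpan R m := by
  apply le_antisymm
  · rw [LinearMap.range_eq_map, ← (stdBasis R (Fin m) (Fin m)).span_eq, Submodule.map_span,
      Submodule.span_le]
    rintro _ ⟨_, ⟨⟨i, j⟩, rfl⟩, rfl⟩
    rw [SetLike.mem_coe, stdBasis_eq_single, sandwich_single]
    exact single_sub_single_mem_rowDifferenceSpan i _ _
  · rw [rowDifferenceSpan, Submodule.span_le]
    rintro _ ⟨i, j, rfl⟩
    simpa only [SetLike.mem_coe, sub_sub_sub_cancel_right] using
      Submodule.sub_mem _ (single_sub_single_last_mem_range (R := R) i j)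
        (single_sub_single_last_mem_range (R := R) i i.castSucc)

lemma lie_mem_rowDifferenceSpan {x y : Matrix (Fin (m + 1)) (Fin (m + 1)) R}
    (hx : x ∈ rowDifferenceSpan R m) (hy : y ∈ rowDifferenceSpan R m) :
    ⁅x, y⁆ ∈ rowDifferenceSpan R m := by
  rw [← range_sandwich_castSuccMatrix_subLastMatrix] at hx hy ⊢
  obtain ⟨X, rfl⟩ := hx
  obtain ⟨Y, rfl⟩ := hy
  exact ⟨⁅X, Y⁆, sandwich_lie subLastMatrix_mul_castSuccMatrix X Y⟩

end

/-- With `n = m + 1`, the subspace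
`a_{n-1} = span{E_{ij} - E_{ii} : 1 ≤ i ≤ n-1, 1 ≤ j ≤ n} ⊂ gl_n` is a Lie subalgebra, and
the linear map `gl_{n-1} → a_{n-1}` determined by `E_{ij} ↦ Ẽ_{ij} = E_{ij} - E_{in}` is a
Lie algebra isomorphism onto `a_{n-1}`. -/
theorem statement15 (m : ℕ) :
    (∀ x ∈ Submodule.span ℂ
        {A : Matrix (Fin (m + 1)) (Fin (m + 1)) ℂ | ∃ (i : Fin m) (j : Fin (m + 1)),
          A = single i.castSucc j 1 - single i.castSucc i.castSucc 1},
      ∀ y ∈ Submodule.span ℂ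
        {A : Matrix (Fin (m + 1)) (Fin (m + 1)) ℂ | ∃ (i : Fin m) (j : Fin (m + 1)),
          A = single i.castSucc j 1 - single i.castSucc i.castSucc 1},
      ⁅x, y⁆ ∈ Submodule.span ℂ
        {A : Matrix (Fin (m + 1)) (Fin (m + 1)) ℂ | ∃ (i : Fin m) (j : Fin (m + 1)),
          A = single i.castSucc j 1 - single i.castSucc i.castSucc 1}) ∧
    ∃ g : Matrix (Fin m) (Fin m) ℂ →ₗ[ℂ] Matrix (Fin (m + 1)) (Fin (m + 1)) ℂ,
      (∀ i j : Fin m, g (single i j 1) =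
        single i.castSucc j.castSucc 1 - single i.castSucc (Fin.last m) 1) ∧
      Function.Injective g ∧
      LinearMap.range g = Submodule.span ℂ
        {A : Matrix (Fin (m + 1)) (Fin (m + 1)) ℂ | ∃ (i : Fin m) (j : Fin (m + 1)),
          A = single i.castSucc j 1 - single i.castSucc i.castSucc 1} ∧
      ∀ x y : Matrix (Fin m) (Fin m) ℂ, g ⁅x, y⁆ = ⁅g x, g y⁆ := by
  have hQP := subLastMatrix_mul_castSuccMatrix (R := ℂ) (m := m)
  exact ⟨fun x hx y hy => lie_mem_rowDifferenceSpan hx hy, _, sandwich_single,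
    sandwich_injective hQP, range_sandwich_castSuccMatrix_subLastMatrix, sandwich_lie hQP⟩
end
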